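/- arXiv:1903.07699 — 7 statements merged into one kernel-verified Lean document; each statement's English description precedes it below -/
import Mathlib

section
/- Let K be a field of characteristic 0 and let A be a commutative integral domain that is a K-algebra. If every two locally nilpotent K-derivations of A commute (i.e. [∂₁,∂₂] = 0 for all locally nilpotent derivations ∂₁, ∂₂ of A), then any two nonzero locally nilpotent derivations of A have the same kernel. -/
/-- A `K`-derivation `δ` of `A` is locally nilpotent if for every `a ∈ A`
there exists `n ≥ 1` with `δⁿ a = 0`. -/
def IsLND {K A : Type*} [CommRing K] [CommRing A] [Algebra K A]
    (δ : Derivation K A A) : Prop :=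
  ∀ a : A, ∃ n : ℕ, 1 ≤ n ∧ (δ.toLinearMap ^ n) a = 0

lemma smul_pow_apply {K A : Type*} [CommRing K] [CommRing A] [Algebra K A]
    (δ : Derivation K A A) (f : A) (hf : δ f = 0) :
    ∀ (n : ℕ) (a : A), ((f • δ).toLinearMap ^ n) a = f ^ n * ((δ.toLinearMap ^ n) a) := by
  intro n
  induction n with
  | zero => intro a; simp
  | succ n ih =>
    intro a
    rw [pow_succ', pow_succ']
    simp only [Module.End.mul_apply]
    have h1 : ∀ x, (f • δ).toLinearMap x = f * δ x := fun x => by simp [mul_comm]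
    rw [h1, ih]
    have h2 : δ (f ^ n) = 0 := by rw [Derivation.leibniz_pow, hf]; simp
    have h3 : δ (f ^ n * (δ.toLinearMap ^ n) a) = f ^ n * δ ((δ.toLinearMap ^ n) a) := by
      rw [Derivation.leibniz, h2]; simp
    rw [h3, pow_succ']
    simp only [Module.End.mul_apply]
    ring_nf
    rfl

lemma smul_isLND {K A : Type*} [CommRing K] [CommRing A] [Algebra K A]
    (δ : Derivation K A A) (f : A) (hf : δ f = 0) (h : IsLND δ) : IsLND (f • δ) := by
  intro a
  obtain ⟨n, hn, hna⟩ := h a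
  exact ⟨n, hn, by rw [smul_pow_apply δ f hf n a, hna, mul_zero]⟩

lemma ker_le {K A : Type*} [Field K] [CharZero K] [CommRing A] [IsDomain A]
    [Algebra K A]
    (hcomm : ∀ δ₁ δ₂ : Derivation K A A, IsLND δ₁ → IsLND δ₂ → ⁅δ₁, δ₂⁆ = 0)
    (δ₁ δ₂ : Derivation K A A) (h₁ : IsLND δ₁) (h₂ : IsLND δ₂) (hne : δ₁ ≠ 0) :
    LinearMap.ker δ₁.toLinearMap ≤ LinearMap.ker δ₂.toLinearMap := by
  intro f hf
  have hf : δ₁ f = 0 := hf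
  have hLND : IsLND (f • δ₁) := smul_isLND δ₁ f hf h₁
  have hc := hcomm (f • δ₁) δ₂ hLND h₂
  have hc' := hcomm δ₁ δ₂ h₁ h₂
  -- δ₁ ≠ 0: pick a with δ₁ a ≠ 0
  obtain ⟨a, ha⟩ : ∃ a, δ₁ a ≠ 0 := by
    by_contra h
    push_neg at h
    exact hne (Derivation.ext h)
  have key : δ₂ f * δ₁ a = 0 := by
    have e1 : ⁅(f • δ₁), δ₂⁆ a = 0 := by rw [hc]; rfl
    have e2 : δ₁ (δ₂ a) = δ₂ (δ₁ a) := by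
      have : ⁅δ₁, δ₂⁆ a = 0 := by rw [hc']; rfl
      rw [Derivation.commutator_apply] at this
      exact sub_eq_zero.mp this
    rw [Derivation.commutator_apply] at e1
    simp only [Derivation.smul_apply, smul_eq_mul] at e1
    rw [Derivation.leibniz, e2] at e1
    simp only [smul_eq_mul] at e1
    linear_combination -e1
  show δ₂ f = 0
  rcases mul_eq_zero.mp key with h | h
  · exact h
  · exact absurd h ha

/-- If all locally nilpotent derivations of a domain of characteristic zero
commute pairwise, then any two nonzero locally nilpotent derivations have the
same kernel. -/
theorem stmt0 {K A : Type*} [Field K] [CharZero K] [CommRing A] [IsDomain A]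
    [Algebra K A]
    (hcomm : ∀ δ₁ δ₂ : Derivation K A A, IsLND δ₁ → IsLND δ₂ → ⁅δ₁, δ₂⁆ = 0) :
    ∀ δ₁ δ₂ : Derivation K A A, IsLND δ₁ → IsLND δ₂ → δ₁ ≠ 0 → δ₂ ≠ 0 →
      LinearMap.ker δ₁.toLinearMap = LinearMap.ker δ₂.toLinearMap := by
  intro δ₁ δ₂ h₁ h₂ hn₁ hn₂
  exact le_antisymm (ker_le hcomm δ₁ δ₂ h₁ h₂ hn₁) (ker_le hcomm δ₂ δ₁ h₂ h₁ hn₂)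
end

section
/- Let K be a field of characteristic 0 and let A be a commutative integral domain that is a K-algebra such that any two nonzero locally nilpotent K-derivations of A have the same kernel. Then the set of locally nilpotent derivations of A is a K-vector subspace of the space of K-derivations of A, and any two locally nilpotent derivations of A commute; consequently, the Lie subalgebra of Der_K(A) generated by the locally nilpotent derivations coincides with the set of locally nilpotent derivations and is abelian. -/
open Finset

section Basic

variable {K A : Type*} [CommRing K] [CommRing A] [Algebra K A]

lemma LND.iterLeibniz (δ : Derivation K A A) (n : ℕ) (x y : A) :
    (δ.toLinearMap ^ n) (x * y) =
      ∑ m ∈ range (n + 1),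
        n.choose m • ((δ.toLinearMap ^ m) x * (δ.toLinearMap ^ (n - m)) y) := by
  set D := δ.toLinearMap with hDdef
  have hD : ∀ u v : A, D (u * v) = D u * v + u * D v := by
    intro u v
    rw [hDdef]
    simp only [Derivation.coeFn_coe]
    rw [δ.leibniz]
    simp only [smul_eq_mul]
    ring
  induction n with
  | zero => simp
  | succ n ih =>
    have : (D ^ (n + 1)) (x * y) = D ((D ^ n) (x * y)) := by
      rw [pow_succ', Module.End.mul_apply]
    rw [this, ih, map_sum]
    have hterm : ∀ i, D (n.choose i • ((D ^ i) x * (D ^ (n - i)) y)) =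
        n.choose i • ((D ^ (i + 1)) x * (D ^ (n - i)) y) +
        n.choose i • ((D ^ i) x * (D ^ (n - i + 1)) y) := by
      intro i
      rw [map_nsmul, hD, smul_add]
      congr 2 <;> rw [pow_succ', Module.End.mul_apply]
    rw [Finset.sum_congr rfl fun i _ => hterm i, sum_add_distrib]
    rw [sum_range_succ' (fun m => (n+1).choose m • ((D ^ m) x * (D ^ (n + 1 - m)) y)) (n+1)]
    have hsplit : ∀ i ∈ range (n + 1),
        (n+1).choose (i+1) • ((D ^ (i+1)) x * (D ^ (n + 1 - (i+1))) y) =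
        n.choose i • ((D ^ (i + 1)) x * (D ^ (n - i)) y) +
        n.choose (i+1) • ((D ^ (i+1)) x * (D ^ (n - i)) y) := by
      intro i hi
      have : n + 1 - (i + 1) = n - i := by omega
      rw [this, Nat.choose_succ_succ, add_smul]
    rw [Finset.sum_congr rfl hsplit, sum_add_distrib]
    have hlast : n.choose (n+1) • ((D ^ (n+1)) x * (D ^ (n - n)) y) = 0 := by
      simp [Nat.choose_succ_self]
    have h2 : ∑ i ∈ range (n + 1), n.choose (i+1) • ((D ^ (i+1)) x * (D ^ (n - i)) y) +
        (n+1).choose 0 • ((D ^ 0) x * (D ^ (n + 1 - 0)) y) =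
        ∑ i ∈ range (n + 1), n.choose i • ((D ^ i) x * (D ^ (n - i + 1)) y) := by
      rw [sum_range_succ (fun i => n.choose (i+1) • ((D ^ (i+1)) x * (D ^ (n - i)) y)) n,
        hlast, add_zero,
        sum_range_succ' (fun i => n.choose i • ((D ^ i) x * (D ^ (n - i + 1)) y)) n]
      congr 1
      · apply Finset.sum_congr rfl
        intro j hj
        have hj' : n - (j + 1) + 1 = n - j := by
          have := mem_range.mp hj; omega
        rw [hj']
      · simp
    rw [add_assoc, h2]

lemma LND.pow_stable (f : A →ₗ[K] A) (a : A) {m n : ℕ} (h : (f ^ m) a = 0)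
    (hmn : m ≤ n) : (f ^ n) a = 0 := by
  rw [show n = (n - m) + m by omega, pow_add, Module.End.mul_apply, h, map_zero]

lemma LND.exists_pow_zero {δ : Derivation K A A} (hδ : IsLND δ) (a : A) :
    ∃ n, (δ.toLinearMap ^ n) a = 0 :=
  (hδ a).imp fun _ h => h.2

/-- `lndNu hδ a` is the least `n` with `δ^n a = 0`. -/
noncomputable def lndNu {δ : Derivation K A A} (hδ : IsLND δ) (a : A) : ℕ :=
  @Nat.find _ (Classical.decPred _) (LND.exists_pow_zero hδ a)

lemma lndNu_spec {δ : Derivation K A A} (hδ : IsLND δ) (a : A) :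
    (δ.toLinearMap ^ (lndNu hδ a)) a = 0 :=
  @Nat.find_spec _ (Classical.decPred _) (LND.exists_pow_zero hδ a)

lemma lndNu_min {δ : Derivation K A A} (hδ : IsLND δ) {a : A} {m : ℕ}
    (h : m < lndNu hδ a) : (δ.toLinearMap ^ m) a ≠ 0 :=
  @Nat.find_min _ (Classical.decPred _) (LND.exists_pow_zero hδ a) _ h

lemma lndNu_le {δ : Derivation K A A} (hδ : IsLND δ) {a : A} {m : ℕ}
    (h : (δ.toLinearMap ^ m) a = 0) : lndNu hδ a ≤ m :=
  @Nat.find_le _ _ (Classical.decPred _) (LND.exists_pow_zero hδ a) h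

lemma lndNu_pos {δ : Derivation K A A} (hδ : IsLND δ) {a : A} (ha : a ≠ 0) :
    1 ≤ lndNu hδ a := by
  by_contra h
  have h0 : lndNu hδ a = 0 := by omega
  have := lndNu_spec hδ a
  rw [h0, pow_zero, Module.End.one_apply] at this
  exact ha this

lemma lndNu_pow_zero_iff {δ : Derivation K A A} (hδ : IsLND δ) {a : A} {m : ℕ} :
    (δ.toLinearMap ^ m) a = 0 ↔ lndNu hδ a ≤ m := by
  constructor
  · exact lndNu_le hδ
  · intro h; exact LND.pow_stable _ a (lndNu_spec hδ a) h

lemma lndNu_apply_eq_zero_iff {δ : Derivation K A A} (hδ : IsLND δ) {a : A} :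
    δ a = 0 ↔ lndNu hδ a ≤ 1 := by
  rw [← lndNu_pow_zero_iff hδ, pow_one]
  rfl

end Basic

section Domain

variable {K A : Type*} [Field K] [CharZero K] [CommRing A] [IsDomain A] [Algebra K A]

lemma LND.charZeroA (K A : Type*) [Field K] [CommRing A] [IsDomain A]
    [CharZero K] [Algebra K A] : CharZero A :=
  charZero_of_injective_algebraMap (algebraMap K A).injective

lemma lndNu_mul {δ : Derivation K A A} (hδ : IsLND δ) {a b : A}
    (ha : a ≠ 0) (hb : b ≠ 0) :
    lndNu hδ (a * b) + 1 = lndNu hδ a + lndNu hδ b := by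
  haveI : CharZero A := LND.charZeroA K A
  set D := δ.toLinearMap with hD
  set p := lndNu hδ a - 1 with hp
  set q := lndNu hδ b - 1 with hq
  have hpa : lndNu hδ a = p + 1 := by have := lndNu_pos hδ ha; omega
  have hqb : lndNu hδ b = q + 1 := by have := lndNu_pos hδ hb; omega
  have hpne : (D ^ p) a ≠ 0 := lndNu_min hδ (by omega)
  have hqne : (D ^ q) b ≠ 0 := lndNu_min hδ (by omega)
  have hpz : ∀ m, p < m → (D ^ m) a = 0 := fun m hm =>
    (lndNu_pow_zero_iff hδ).mpr (by omega)
  have hqz : ∀ m, q < m → (D ^ m) b = 0 := fun m hm =>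
    (lndNu_pow_zero_iff hδ).mpr (by omega)
  have hup : (D ^ (p + q + 1)) (a * b) = 0 := by
    rw [LND.iterLeibniz δ (p + q + 1) a b]
    apply Finset.sum_eq_zero
    intro m hm
    rcases le_or_gt m p with h | h
    · rw [hqz (p + q + 1 - m) (by omega), mul_zero, smul_zero]
    · rw [hpz m (by omega), zero_mul, smul_zero]
  have hlow : (D ^ (p + q)) (a * b) ≠ 0 := by
    rw [LND.iterLeibniz δ (p + q) a b]
    rw [Finset.sum_eq_single p]
    · have : p + q - p = q := by omega
      rw [this, nsmul_eq_mul]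
      exact mul_ne_zero (Nat.cast_ne_zero.mpr
        (Nat.choose_pos (Nat.le_add_right p q)).ne') (mul_ne_zero hpne hqne)
    · intro m _ hmp
      rcases lt_or_gt_of_ne hmp with h | h
      · rw [hqz (p + q - m) (by omega), mul_zero, smul_zero]
      · rw [hpz m (by omega), zero_mul, smul_zero]
    · intro h
      exact absurd (mem_range.mpr (by omega)) h
  have h1 : lndNu hδ (a * b) ≤ p + q + 1 := lndNu_le hδ hup
  have h2 : p + q < lndNu hδ (a * b) := by
    by_contra h
    exact hlow ((lndNu_pow_zero_iff hδ).mpr (by omega))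
  omega

lemma lndNu_deriv {δ : Derivation K A A} (hδ : IsLND δ) {a : A} (h : δ a ≠ 0) :
    lndNu hδ (δ a) + 1 = lndNu hδ a := by
  set D := δ.toLinearMap with hD
  have key : ∀ m, (D ^ m) (δ a) = (D ^ (m + 1)) a := by
    intro m
    rw [pow_succ, Module.End.mul_apply]
    rfl
  have h1 : lndNu hδ a ≥ 2 := by
    by_contra hc
    exact h ((lndNu_apply_eq_zero_iff hδ).mpr (by omega))
  have hle : lndNu hδ (δ a) ≤ lndNu hδ a - 1 := by
    apply lndNu_le
    rw [key]
    apply (lndNu_pow_zero_iff hδ).mpr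
    omega
  have hge : ¬ (lndNu hδ (δ a) ≤ lndNu hδ a - 2) := by
    intro hc
    have : (D ^ (lndNu hδ a - 2)) (δ a) = 0 := (lndNu_pow_zero_iff hδ).mpr hc
    rw [key] at this
    exact lndNu_min hδ (by omega) this
  omega

end Domain

section Main

variable {K A : Type*} [Field K] [CharZero K] [CommRing A] [IsDomain A] [Algebra K A]

lemma LND.commute
    (hker : ∀ δ₁ δ₂ : Derivation K A A, IsLND δ₁ → IsLND δ₂ → δ₁ ≠ 0 → δ₂ ≠ 0 →
      LinearMap.ker δ₁.toLinearMap = LinearMap.ker δ₂.toLinearMap)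
    (δ₁ δ₂ : Derivation K A A) (h1 : IsLND δ₁) (h2 : IsLND δ₂) :
    ⁅δ₁, δ₂⁆ = 0 := by
  by_cases hz1 : δ₁ = 0
  · ext a; simp [Derivation.commutator_apply, hz1]
  by_cases hz2 : δ₂ = 0
  · ext a; simp [Derivation.commutator_apply, hz2]
  haveI : CharZero A := LND.charZeroA K A
  have hk : ∀ a : A, δ₁ a = 0 ↔ δ₂ a = 0 := by
    intro a
    have h := hker δ₁ δ₂ h1 h2 hz1 hz2
    rw [SetLike.ext_iff] at h
    simpa [LinearMap.mem_ker] using h a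
  obtain ⟨a₀, ha₀⟩ : ∃ a, δ₁ a ≠ 0 := by
    by_contra h; push_neg at h; exact hz1 (Derivation.ext h)
  set D₁ := δ₁.toLinearMap with hD₁
  have hcoe1 : ∀ (x : A), D₁ x = δ₁ x := fun _ => rfl
  have ha₀0 : a₀ ≠ 0 := fun h => ha₀ (by simp [h])
  have hν2 : 2 ≤ lndNu h1 a₀ := by
    by_contra hc; exact ha₀ ((lndNu_apply_eq_zero_iff h1).mpr (by omega))
  set r : A := (D₁ ^ (lndNu h1 a₀ - 2)) a₀ with hrdef
  set s := δ₁ r with hsdef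
  have hpow1 : s = (D₁ ^ (lndNu h1 a₀ - 1)) a₀ := by
    rw [hsdef, hrdef, ← hcoe1, show lndNu h1 a₀ - 1 = (lndNu h1 a₀ - 2) + 1 by omega,
      pow_succ', Module.End.mul_apply]
  have hs0 : s ≠ 0 := by rw [hpow1]; exact lndNu_min h1 (by omega)
  have hδ₁s : δ₁ s = 0 := by
    have : δ₁ s = (D₁ ^ lndNu h1 a₀) a₀ := by
      rw [hpow1, ← hcoe1, ← Module.End.mul_apply, ← pow_succ',
        show lndNu h1 a₀ - 1 + 1 = lndNu h1 a₀ by omega]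
    rw [this]; exact lndNu_spec h1 a₀
  have hδ₂s : δ₂ s = 0 := (hk s).mp hδ₁s
  set t := δ₂ r with htdef
  set E : Derivation K A A := s • δ₂ - t • δ₁ with hE
  have hEapp : ∀ a, E a = s * δ₂ a - t * δ₁ a := by
    intro a
    rw [hE, Derivation.sub_apply, Derivation.smul_apply, Derivation.smul_apply,
      smul_eq_mul, smul_eq_mul]
  have hEr : E r = 0 := by rw [hEapp, ← hsdef, ← htdef]; ring
  have hEs : E s = 0 := by rw [hEapp, hδ₁s, hδ₂s]; ring
  have hEker : ∀ a, δ₁ a = 0 → E a = 0 := fun a h => by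
    rw [hEapp, h, (hk a).mp h]; ring
  have prod3 : ∀ (F : Derivation K A A) (u v w : A),
      F (u * v * w) = u * v * F w + u * w * F v + v * w * F u := by
    intro F u v w
    rw [F.leibniz, F.leibniz]
    simp only [smul_eq_mul]
    ring
  have hEpow_s : ∀ m, E (s ^ m) = 0 := by
    intro m; rw [Derivation.leibniz_pow, hEs]; simp
  have hδ₁pow_s : ∀ m, δ₁ (s ^ m) = 0 := by
    intro m; rw [Derivation.leibniz_pow, hδ₁s]; simp
  have hEpow_r : ∀ m, E (r ^ m) = 0 := by
    intro m; rw [Derivation.leibniz_pow, hEr]; simp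
  -- main induction : E vanishes identically
  have main : ∀ n, ∀ a : A, lndNu h1 a ≤ n → E a = 0 := by
    intro n
    induction n using Nat.strong_induction_on with
    | _ n IH =>
      intro a hle
      by_cases hb : lndNu h1 a ≤ 1
      · exact hEker a ((lndNu_apply_eq_zero_iff h1).mpr hb)
      · set N := lndNu h1 a - 1 with hN
        have hN1 : 1 ≤ N := by omega
        have hNn : N < n := by omega
        have hnua : lndNu h1 a = N + 1 := by omega
        have hDtop : (D₁ ^ (N + 1)) a = 0 := by
          rw [← hnua]; exact lndNu_spec h1 a
        set c : ℕ → K := fun k => (-1) ^ k * (Nat.descFactorial N (N - k) : K) with hc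
        set cA : ℕ → A := fun k => algebraMap K A (c k) with hcA
        have hδ₁cA : ∀ k, δ₁ (cA k) = 0 := fun k => Derivation.map_algebraMap δ₁ (c k)
        have hEcA : ∀ k, E (cA k) = 0 := fun k => Derivation.map_algebraMap E (c k)
        set T : ℕ → A := fun k => (D₁ ^ k) a * r ^ k * s ^ (N - k) with hT
        set B : ℕ → A := fun k =>
          cA k * ((k : A) * ((D₁ ^ k) a * r ^ (k - 1) * s ^ (N - k + 1))) with hB
        set G : A := ∑ k ∈ range (N + 1), cA k * T k with hG
        have hu_succ : ∀ k, δ₁ ((D₁ ^ k) a) = (D₁ ^ (k+1)) a := by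
          intro k; rw [← hcoe1, pow_succ', Module.End.mul_apply]
        have hδ₁rpow : ∀ k : ℕ, δ₁ (r ^ k) = (k : A) * r ^ (k-1) * s := by
          intro k
          rw [Derivation.leibniz_pow]
          simp only [nsmul_eq_mul, smul_eq_mul, ← hsdef]
          ring
        have hterm : ∀ k, δ₁ (cA k * T k) =
            cA k * ((D₁ ^ (k+1)) a * r ^ k * s ^ (N - k)) + B k := by
          intro k
          rw [δ₁.leibniz, hδ₁cA, smul_zero, add_zero, smul_eq_mul, hT]
          simp only []
          rw [prod3 δ₁ ((D₁ ^ k) a) (r ^ k) (s ^ (N - k)), hδ₁pow_s, hδ₁rpow, hu_succ,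
            hB]
          simp only []
          ring
        have hcoeff : ∀ k, k < N → cA (k+1) * ((k+1 : ℕ) : A) = -(cA k) := by
          intro k hk
          have hnat : Nat.descFactorial N (N - k) =
              (k+1) * Nat.descFactorial N (N - (k+1)) := by
            rw [show N - k = (N - (k+1)) + 1 by omega, Nat.descFactorial_succ]
            congr 1
            omega
          have hK : c (k+1) * ((k+1 : ℕ) : K) = -(c k) := by
            rw [hc]
            simp only []
            rw [hnat]
            push_cast
            ring
          rw [hcA]
          simp only []
          rw [show ((k+1 : ℕ) : A) = algebraMap K A ((k+1 : ℕ) : K) by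
            rw [map_natCast], ← map_mul, hK, map_neg]
        have hδG : δ₁ G = 0 := by
          rw [hG, map_sum, sum_range_succ]
          have hmid : ∀ k ∈ range N, δ₁ (cA k * T k) = B k - B (k+1) := by
            intro k hkmem
            have hk : k < N := mem_range.mp hkmem
            rw [hterm k]
            have hidx : N - (k+1) + 1 = N - k := by omega
            have hBk1 : B (k+1) =
                -(cA k) * ((D₁ ^ (k+1)) a * r ^ k * s ^ (N - k)) := by
              rw [hB]
              simp only []
              rw [show (k+1) - 1 = k by omega, hidx, ← mul_assoc, hcoeff k hk]
            rw [hBk1]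
            ring
          have hlastt : δ₁ (cA N * T N) = B N := by
            rw [hterm N, hDtop]
            ring
          rw [sum_congr rfl hmid, hlastt, Finset.sum_range_sub' B]
          have hB0 : B 0 = 0 := by
            rw [hB]
            simp
          rw [hB0]
          ring
        have hEG0 : E G = 0 := hEker G hδG
        have hEG : E G = cA 0 * (s ^ N * E a) := by
          rw [hG, map_sum, sum_range_succ' (fun k => E (cA k * T k)) N]
          have hzero : ∀ j ∈ range N, E (cA (j+1) * T (j+1)) = 0 := by
            intro j hj
            have hET : E (T (j+1)) = 0 := by
              have hEDa : E ((D₁ ^ (j+1)) a) = 0 := by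
                have hnule : lndNu h1 ((D₁ ^ (j+1)) a) ≤ N - j := by
                  apply lndNu_le
                  rw [← Module.End.mul_apply, ← pow_add]
                  rw [show N - j + (j + 1) = N + 1 by
                    have := mem_range.mp hj; omega]
                  exact hDtop
                exact IH (N - j) (by omega) _ hnule
              rw [hT]
              simp only []
              rw [prod3 E ((D₁ ^ (j+1)) a) (r ^ (j+1)) (s ^ (N - (j+1))),
                hEpow_s, hEpow_r, hEDa]
              ring
            rw [E.leibniz, hET, hEcA, smul_zero, smul_zero, add_zero]
          rw [sum_congr rfl hzero, Finset.sum_const_zero, zero_add]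
          rw [E.leibniz, hEcA, smul_zero, add_zero, smul_eq_mul, hT]
          simp only [pow_zero, Module.End.one_apply, Nat.sub_zero]
          rw [prod3 E a 1 (s ^ N), hEpow_s, E.map_one_eq_zero]
          ring
        have hfin : cA 0 * (s ^ N * E a) = 0 := by rw [← hEG]; exact hEG0
        have hcA0 : cA 0 ≠ 0 := by
          rw [hcA]
          simp only []
          intro hcon
          have h0 : c 0 = 0 := by
            apply (algebraMap K A).injective
            rw [hcon, map_zero]
          rw [hc] at h0
          simp only [pow_zero, one_mul, Nat.sub_zero, Nat.cast_eq_zero,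
            Nat.descFactorial_self] at h0
          exact Nat.factorial_ne_zero N h0
        rcases mul_eq_zero.mp hfin with h | h
        · exact absurd h hcA0
        rcases mul_eq_zero.mp h with h' | h'
        · exact absurd h' (pow_ne_zero N hs0)
        · exact h'
  have hId : ∀ a, s * δ₂ a = t * δ₁ a := by
    intro a
    have := main (lndNu h1 a) a le_rfl
    rw [hEapp] at this
    exact sub_eq_zero.mp this
  have ht0 : t ≠ 0 := by
    intro h
    apply hz2
    ext a
    have h2' := hId a
    rw [h, zero_mul] at h2'
    rcases mul_eq_zero.mp h2' with h' | h'
    · exact absurd h' hs0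
    · simpa using h'
  have hδ₁t : δ₁ t = 0 := by
    by_contra hne
    have hνt : 2 ≤ lndNu h1 t := by
      by_contra hc; exact hne ((lndNu_apply_eq_zero_iff h1).mpr (by omega))
    have hνs : lndNu h1 s = 1 :=
      le_antisymm ((lndNu_apply_eq_zero_iff h1).mp hδ₁s) (lndNu_pos h1 hs0)
    set D₂ := δ₂.toLinearMap with hD₂
    have step : ∀ x : A, δ₁ x ≠ 0 → δ₁ (δ₂ x) ≠ 0 := by
      intro x hx
      have heq := hId x
      have hrhs0 : t * δ₁ x ≠ 0 := mul_ne_zero ht0 hx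
      have hδ₂x0 : δ₂ x ≠ 0 := by
        intro h; rw [h, mul_zero] at heq; exact hrhs0 heq.symm
      have e1 := lndNu_mul h1 hs0 hδ₂x0
      have e2 := lndNu_mul h1 ht0 hx
      have e3 : 1 ≤ lndNu h1 (δ₁ x) := lndNu_pos h1 hx
      rw [heq] at e1
      intro hcon
      have := (lndNu_apply_eq_zero_iff h1).mp hcon
      omega
    have hall : ∀ n, δ₁ ((D₂ ^ n) r) ≠ 0 := by
      intro n
      induction n with
      | zero => simpa using hs0
      | succ n ih =>
        rw [pow_succ', Module.End.mul_apply]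
        exact step _ ih
    obtain ⟨n, _, hn⟩ := h2 r
    apply hall n
    rw [← hD₂] at hn
    rw [hn]
    simp
  -- conclude
  ext a
  rw [Derivation.commutator_apply]
  have l1 : s * (s * δ₁ (δ₂ a)) = s * (t * δ₁ (δ₁ a)) := by
    have e1 : δ₁ (s * δ₂ a) = s * δ₁ (δ₂ a) := by
      rw [δ₁.leibniz, hδ₁s]
      simp [smul_eq_mul]
    have e2 : δ₁ (t * δ₁ a) = t * δ₁ (δ₁ a) := by
      rw [δ₁.leibniz, hδ₁t]
      simp [smul_eq_mul]
    rw [← e1, ← e2, hId a]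
  have l2 : s * (s * δ₂ (δ₁ a)) = s * (t * δ₁ (δ₁ a)) := by
    rw [hId (δ₁ a)]
  have := mul_left_cancel₀ hs0 (mul_left_cancel₀ hs0 (l1.trans l2.symm) ▸ l1.trans l2.symm)
  have lfin : δ₁ (δ₂ a) = δ₂ (δ₁ a) :=
    mul_left_cancel₀ hs0 (mul_left_cancel₀ hs0 (l1.trans l2.symm))
  rw [lfin]
  simp

end Main

section Closure

variable {K A : Type*} [CommRing K] [CommRing A] [Algebra K A]

lemma LND.zero : IsLND (0 : Derivation K A A) := by
  intro a
  refine ⟨1, le_rfl, ?_⟩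
  rw [pow_one]
  simp

lemma LND.smul (c : K) {δ : Derivation K A A} (hδ : IsLND δ) : IsLND (c • δ) := by
  intro a
  obtain ⟨n, hn, h⟩ := hδ a
  refine ⟨n, hn, ?_⟩
  rw [Derivation.coe_smul_linearMap, smul_pow, LinearMap.smul_apply, h, smul_zero]

lemma LND.add {δ₁ δ₂ : Derivation K A A} (h1 : IsLND δ₁) (h2 : IsLND δ₂)
    (hc : ⁅δ₁, δ₂⁆ = 0) : IsLND (δ₁ + δ₂) := by
  have hsub : ∀ a, δ₁ (δ₂ a) - δ₂ (δ₁ a) = 0 := fun a => by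
    rw [← Derivation.commutator_apply, hc]; simp
  have hcomm : Commute δ₁.toLinearMap δ₂.toLinearMap := by
    apply LinearMap.ext
    intro a
    exact (sub_eq_zero.mp (hsub a)).symm ▸ rfl
  intro a
  obtain ⟨n1, hn1, hx⟩ := h1 a
  obtain ⟨n2, hn2, hy⟩ := h2 a
  refine ⟨n1 + n2, by omega, ?_⟩
  rw [Derivation.coe_add_linearMap, hcomm.add_pow']
  rw [LinearMap.coe_sum, Finset.sum_apply]
  apply Finset.sum_eq_zero
  rintro ⟨i, j⟩ hmem
  have hij : i + j = n1 + n2 := by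
    simpa using hmem
  simp only [LinearMap.smul_apply, Module.End.mul_apply]
  rcases le_or_gt n2 j with h | h
  · rw [LND.pow_stable _ a hy h, map_zero, smul_zero]
  · have hi : n1 ≤ i := by omega
    rw [← Module.End.mul_apply, (hcomm.pow_pow i j).eq, Module.End.mul_apply,
      LND.pow_stable _ a hx hi, map_zero, smul_zero]

end Closure

/-- If any two nonzero locally nilpotent derivations of a domain of
characteristic zero have the same kernel, then the set of locally nilpotent
derivations is a `K`-subspace of `Der_K(A)`, any two locally nilpotent
derivations commute, and the Lie subalgebra generated by the locally
nilpotent derivations coincides with the set of locally nilpotent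
derivations and is abelian. -/
theorem stmt1 {K A : Type*} [Field K] [CharZero K] [CommRing A] [IsDomain A]
    [Algebra K A]
    (hker : ∀ δ₁ δ₂ : Derivation K A A, IsLND δ₁ → IsLND δ₂ → δ₁ ≠ 0 → δ₂ ≠ 0 →
      LinearMap.ker δ₁.toLinearMap = LinearMap.ker δ₂.toLinearMap) :
    (∃ V : Submodule K (Derivation K A A),
        (V : Set (Derivation K A A)) = {δ | IsLND δ}) ∧
    (∀ δ₁ δ₂ : Derivation K A A, IsLND δ₁ → IsLND δ₂ → ⁅δ₁, δ₂⁆ = 0) ∧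
    ((LieSubalgebra.lieSpan K (Derivation K A A) {δ | IsLND δ} :
        Set (Derivation K A A)) = {δ | IsLND δ}) ∧
    (∀ x y : Derivation K A A,
        x ∈ LieSubalgebra.lieSpan K (Derivation K A A) {δ | IsLND δ} →
        y ∈ LieSubalgebra.lieSpan K (Derivation K A A) {δ | IsLND δ} →
        ⁅x, y⁆ = 0) := by
  have hcomm : ∀ δ₁ δ₂ : Derivation K A A, IsLND δ₁ → IsLND δ₂ → ⁅δ₁, δ₂⁆ = 0 :=
    LND.commute hker
  set S : LieSubalgebra K (Derivation K A A) :=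
    { carrier := {δ | IsLND δ}
      add_mem' := fun {x y} hx hy => LND.add hx hy (hcomm x y hx hy)
      zero_mem' := LND.zero
      smul_mem' := fun c δ hδ => LND.smul c hδ
      lie_mem' := fun {x y} hx hy => (hcomm x y hx hy) ▸ LND.zero } with hS
  have hspan : LieSubalgebra.lieSpan K (Derivation K A A) {δ | IsLND δ} = S := by
    apply le_antisymm
    · exact (LieSubalgebra.lieSpan_le).mpr (fun x hx => hx)
    · exact fun x hx => LieSubalgebra.subset_lieSpan hx
  refine ⟨⟨S.toSubmodule, rfl⟩, hcomm, ?_, ?_⟩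
  · rw [hspan]; rfl
  · intro x y hx hy
    rw [hspan] at hx hy
    exact hcomm x y hx hy
end

section
/- Let K be a field of characteristic 0, n ≥ 1, and R = K[[x₁,…,xₙ]] the formal power series ring. Let D be a K-derivation of R such that for every nonzero f ∈ R one has ord(D f − ∂f/∂x₁) ≥ ord(f) (i.e. the lowest homogeneous component of D, as a graded operator, is ∂/∂x₁). Then for every nonzero g ∈ ker D, the lowest homogeneous component of g contains no variable x₁, i.e. it lies in the subring K[[x₂,…,xₙ]]. -/
/-- The total degree of a monomial exponent. -/
def tdeg {n : ℕ} (d : Fin n →₀ ℕ) : ℕ := d.sum fun _ e => e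

/-- The formal partial derivative `∂/∂xᵢ` on `K[[x₁,…,xₙ]]`, acting
coefficientwise. -/
noncomputable def formalPDeriv {K : Type*} [Field K] {n : ℕ} (i : Fin n)
    (f : MvPowerSeries (Fin n) K) : MvPowerSeries (Fin n) K :=
  fun d => ((d i + 1 : ℕ) : K) * MvPowerSeries.coeff (d + Finsupp.single i 1) f

/-!
If `d` is a lowest-degree exponent of `g` with `d₁ ≠ 0`, then `e = d - x₁` has degree
`tdeg d - 1`, so the hypothesis on `D` applied with `k = tdeg d` gives
`coeff e (D g) = coeff e (∂g/∂x₁) = d₁ · coeff d g`. For `g ∈ ker D` the left side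
vanishes, and `d₁ ≠ 0` in characteristic zero.
-/

open MvPowerSeries Finsupp

theorem tdeg_eq_degree {n : ℕ} (d : Fin n →₀ ℕ) : tdeg d = d.degree := rfl

theorem single_one_le_of_ne_zero {n : ℕ} {i : Fin n} {d : Fin n →₀ ℕ} (hd : d i ≠ 0) :
    single i 1 ≤ d :=
  single_le_iff.mpr (Nat.one_le_iff_ne_zero.mpr hd)

theorem tdeg_sub_single_lt {n : ℕ} {i : Fin n} {d : Fin n →₀ ℕ} (hd : d i ≠ 0) :
    tdeg (d - single i 1) < tdeg d := by
  have hdeg := congrArg degree (tsub_add_cancel_of_le (single_one_le_of_ne_zero hd))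
  rw [map_add, degree_single] at hdeg
  rw [tdeg_eq_degree, tdeg_eq_degree]
  omega

theorem coeff_formalPDeriv_sub_single {K : Type*} [Field K] {n : ℕ} {i : Fin n}
    {d : Fin n →₀ ℕ} (hd : d i ≠ 0) (f : MvPowerSeries (Fin n) K) :
    coeff (d - single i 1) (formalPDeriv i f) = (d i : K) * coeff d f := by
  change (((d - single i 1 : Fin n →₀ ℕ) i + 1 : ℕ) : K) *
      coeff (d - single i 1 + single i 1) f = _
  rw [tsub_add_cancel_of_le (single_one_le_of_ne_zero hd), tsub_apply, single_eq_same,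
    Nat.sub_add_cancel (Nat.one_le_iff_ne_zero.mpr hd)]

/-- Let `D` be a derivation of `K[[x₁,…,xₙ]]` whose lowest homogeneous
component is `∂/∂x₁`, i.e. `ord(D f − ∂f/∂x₁) ≥ ord f` for all `f`.  Then the
lowest homogeneous component of any nonzero `g ∈ ker D` contains no variable
`x₁`: every monomial of `g` of minimal total degree which involves `x₁` has
zero coefficient. -/
theorem stmt3 {K : Type*} [Field K] [CharZero K] (n : ℕ) (hn : 1 ≤ n)
    (D : Derivation K (MvPowerSeries (Fin n) K) (MvPowerSeries (Fin n) K))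
    (hD : ∀ f : MvPowerSeries (Fin n) K, ∀ k : ℕ,
      (∀ d : Fin n →₀ ℕ, tdeg d < k → MvPowerSeries.coeff d f = 0) →
      (∀ d : Fin n →₀ ℕ, tdeg d < k →
        MvPowerSeries.coeff d (D f - formalPDeriv ⟨0, hn⟩ f) = 0)) :
    ∀ g : MvPowerSeries (Fin n) K, D g = 0 → g ≠ 0 →
      ∀ d : Fin n →₀ ℕ,
        (∀ e : Fin n →₀ ℕ, tdeg e < tdeg d → MvPowerSeries.coeff e g = 0) →
        d ⟨0, hn⟩ ≠ 0 → MvPowerSeries.coeff d g = 0 := by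
  intro g hDg _ d hlow hd
  have h := hD g (tdeg d) hlow _ (tdeg_sub_single_lt hd)
  rw [hDg, zero_sub, map_neg, neg_eq_zero, coeff_formalPDeriv_sub_single hd] at h
  exact (mul_eq_zero.mp h).resolve_left (Nat.cast_ne_zero.mpr hd)
end

section
/- Let K be a field of characteristic 0, n ≥ 1, and R = K[[x₁,…,xₙ]]. Let D be a K-derivation of R such that for every nonzero f ∈ R one has ord(D f − ∂f/∂x₁) ≥ ord(f). Then the map ker D → K[[x₂,…,xₙ]] sending g(x₁,x₂,…,xₙ) to g(0,x₂,…,xₙ) (substitution of 0 for x₁) is an isomorphism of K-algebras; in particular, for every g₀ ∈ K[[x₂,…,xₙ]] there exists a unique g ∈ ker D with g(0,x₂,…,xₙ) = g₀. -/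
/-- Substitution of `0` for the variable `xᵢ` in a power series: keeps only
the `xᵢ`-free monomials.  The result is viewed inside `K[[x₁,…,xₙ]]` as the
subring `K[[…,x̂ᵢ,…]]` of `xᵢ`-free power series. -/
noncomputable def substZero {K : Type*} [Field K] {n : ℕ} (i : Fin n)
    (g : MvPowerSeries (Fin n) K) : MvPowerSeries (Fin n) K :=
  fun d => if d i = 0 then MvPowerSeries.coeff d g else 0

open MvPowerSeries Finsupp

namespace MvPowerSeries

section pintegral

variable {σ K : Type*} [Field K]

noncomputable def pintegral (i : σ) : MvPowerSeries σ K →ₗ[K] MvPowerSeries σ K where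
  toFun f d := if d i = 0 then 0 else coeff (d - single i 1) f / d i
  map_add' f g := by
    funext d
    show _ = (if d i = 0 then (0 : K) else _) + (if d i = 0 then (0 : K) else _)
    split_ifs
    · simp
    · simp [add_div]
  map_smul' c f := by
    funext d
    show _ = c * (if d i = 0 then (0 : K) else _)
    split_ifs
    · simp
    · simp [mul_div_assoc]

theorem coeff_pintegral (i : σ) (f : MvPowerSeries σ K) (d : σ →₀ ℕ) :
    coeff d (pintegral i f) = if d i = 0 then 0 else coeff (d - single i 1) f / d i := rfl

theorem pderiv_pintegral [CharZero K] (i : σ) (f : MvPowerSeries σ K) :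
    pderiv K i (pintegral i f) = f := by
  classical
  ext d
  rw [coeff_pderiv, coeff_pintegral]
  simp only [Finsupp.add_apply, single_eq_same, Nat.add_one_ne_zero, if_false,
    add_tsub_cancel_right]
  push_cast
  exact div_mul_cancel₀ _ (Nat.cast_add_one_ne_zero _)

theorem order_add_one_le_order_pintegral (i : σ) (f : MvPowerSeries σ K) :
    f.order + 1 ≤ (pintegral i f).order := by
  refine le_order fun d hd => ?_
  rw [coeff_pintegral]
  split_ifs with h
  · rfl
  · rw [← sub_add_single_one_cancel h, map_add, degree_single, Nat.cast_add, Nat.cast_one] at hd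
    rw [coeff_of_lt_order (lt_of_add_lt_add_right hd), zero_div]

theorem pderiv_eq_zero_of_coeff_eq_zero {i : σ} {g : MvPowerSeries σ K}
    (hg : ∀ d : σ →₀ ℕ, d i ≠ 0 → coeff d g = 0) : pderiv K i g = 0 := by
  classical
  ext d
  rw [coeff_pderiv, hg _ (by simp), zero_mul, map_zero]

end pintegral

theorem exists_fixedPoint_of_le_order_sub {σ R : Type*} [Ring R]
    (T : MvPowerSeries σ R → MvPowerSeries σ R)
    (hT : ∀ f g, (f - g).order + 1 ≤ (T f - T g).order) : ∃ g, T g = g := by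
  set u : ℕ → MvPowerSeries σ R := fun k => T^[k] 0
  have u_succ (k : ℕ) : T (u k) = u (k + 1) := (Function.iterate_succ_apply' T k 0).symm
  have le_order_succ (k : ℕ) : (k : ℕ∞) ≤ (u k - u (k + 1)).order := by
    induction k with
    | zero => simp
    | succ k ih =>
      calc ((k + 1 : ℕ) : ℕ∞) ≤ (u k - u (k + 1)).order + 1 := by push_cast; gcongr
        _ ≤ _ := by simpa only [u_succ] using hT (u k) (u (k + 1))
  have le_order_of_le {k m : ℕ} (hkm : k ≤ m) : (k : ℕ∞) ≤ (u k - u m).order := by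
    induction hkm with
    | refl => simp
    | @step m hkm ih =>
      calc (k : ℕ∞) ≤ min (u k - u m).order (u m - u (m + 1)).order :=
            le_min ih ((Nat.cast_le.2 hkm).trans (le_order_succ m))
        _ ≤ _ := by simpa using min_order_le_add (f := u k - u m) (g := u m - u (m + 1))
  let g : MvPowerSeries σ R := fun d => coeff d (u (degree d + 1))
  have le_order_sub_g (k : ℕ) : (k : ℕ∞) ≤ (g - u k).order := nat_le_order fun d hd => by
    change coeff d (u (degree d + 1)) - coeff d (u k) = 0
    rw [← map_sub]
    exact coeff_of_lt_order ((Nat.cast_lt.2 (Nat.lt_succ_self _)).trans_le (le_order_of_le hd))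
  refine ⟨g, ext fun d => sub_eq_zero.1 ?_⟩
  have : ((degree d : ℕ) : ℕ∞) < (T g - u (degree d + 1)).order := by
    calc ((degree d : ℕ) : ℕ∞) < (degree d : ℕ) + 1 := by exact_mod_cast Nat.lt_succ_self _
      _ ≤ (g - u (degree d)).order + 1 := by gcongr; exact le_order_sub_g _
      _ ≤ _ := by simpa only [u_succ] using hT g (u (degree d))
  change coeff d (T g) - coeff d (u (degree d + 1)) = 0
  rw [← map_sub]
  exact coeff_of_lt_order this

end MvPowerSeries

theorem formalPDeriv_eq_pderiv {K : Type*} [Field K] {n : ℕ} (i : Fin n)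
    (f : MvPowerSeries (Fin n) K) : formalPDeriv i f = pderiv K i f := by
  ext d
  rw [coeff_pderiv, mul_comm, ← Nat.cast_succ]
  rfl

theorem order_le_order_of_forall_tdeg_lt {K : Type*} [Field K] {n : ℕ}
    (Φ : MvPowerSeries (Fin n) K → MvPowerSeries (Fin n) K)
    (hΦ : ∀ f : MvPowerSeries (Fin n) K, ∀ k : ℕ,
      (∀ d : Fin n →₀ ℕ, tdeg d < k → coeff d f = 0) →
      ∀ d : Fin n →₀ ℕ, tdeg d < k → coeff d (Φ f) = 0)
    (f : MvPowerSeries (Fin n) K) : f.order ≤ (Φ f).order :=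
  le_order fun d hd => hΦ f (tdeg d + 1)
    (fun _ hd' => coeff_of_lt_order ((Nat.cast_le.2 (Nat.lt_succ_iff.1 hd')).trans_lt hd))
    d (Nat.lt_succ_self _)

section substZero

variable {K : Type*} [Field K] {n : ℕ}

theorem coeff_substZero (i : Fin n) (g : MvPowerSeries (Fin n) K) (d : Fin n →₀ ℕ) :
    coeff d (substZero i g) = if d i = 0 then coeff d g else 0 := rfl

theorem substZero_mul (i : Fin n) (a b : MvPowerSeries (Fin n) K) :
    substZero i (a * b) = substZero i a * substZero i b := by
  ext d
  rw [coeff_substZero, coeff_mul, coeff_mul]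
  split_ifs with h
  · refine Finset.sum_congr rfl fun p hp => ?_
    have : p.1 i + p.2 i = 0 := by
      rw [← Finsupp.add_apply, Finset.HasAntidiagonal.mem_antidiagonal.1 hp, h]
    rw [coeff_substZero, coeff_substZero, if_pos (by omega), if_pos (by omega)]
  · refine (Finset.sum_eq_zero fun p hp => ?_).symm
    have : p.1 i + p.2 i ≠ 0 := by
      rwa [← Finsupp.add_apply, Finset.HasAntidiagonal.mem_antidiagonal.1 hp]
    rw [coeff_substZero, coeff_substZero]
    split_ifs <;> simp_all

noncomputable def substZeroAlgHom (i : Fin n) :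
    MvPowerSeries (Fin n) K →ₐ[K] MvPowerSeries (Fin n) K where
  toFun := substZero i
  map_one' := by
    ext d
    rw [coeff_substZero, coeff_one]
    split_ifs <;> simp_all
  map_mul' := substZero_mul i
  map_zero' := by
    ext d
    simp [coeff_substZero]
  map_add' a b := by
    ext d
    simp only [coeff_substZero, map_add]
    split_ifs <;> simp
  commutes' c := by
    ext d
    rw [coeff_substZero, MvPowerSeries.algebraMap_apply, coeff_C]
    split_ifs <;> simp_all

@[simp]
theorem substZeroAlgHom_apply (i : Fin n) (g : MvPowerSeries (Fin n) K) :
    substZeroAlgHom i g = substZero i g := rfl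

theorem substZero_eq_self {i : Fin n} {g : MvPowerSeries (Fin n) K}
    (hg : ∀ d : Fin n →₀ ℕ, d i ≠ 0 → coeff d g = 0) : substZero i g = g := by
  ext d
  rw [coeff_substZero]
  split_ifs with h
  · rfl
  · exact (hg d h).symm

theorem substZero_pintegral (i : Fin n) (f : MvPowerSeries (Fin n) K) :
    substZero i (pintegral i f) = 0 := by
  ext d
  rw [coeff_substZero, coeff_pintegral]
  split_ifs <;> simp

end substZero

section kernel

variable {K : Type*} [Field K] [CharZero K] {n : ℕ}

theorem eq_zero_of_order_le_order_pderiv {i : Fin n} {h : MvPowerSeries (Fin n) K}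
    (hord : h.order ≤ (pderiv K i h).order) (hs : substZero i h = 0) : h = 0 := by
  by_contra hne
  obtain ⟨d, hd, hdeg⟩ := exists_coeff_ne_zero_and_order (ne_zero_iff_order_finite.1 hne)
  by_cases hdi : d i = 0
  · exact hd (by simpa [coeff_substZero, hdi] using congr(coeff d $hs))
  · have hcoeff : coeff (d - single i 1) (pderiv K i h) ≠ 0 := by
      rw [coeff_pderiv, sub_add_single_one_cancel hdi]
      exact mul_ne_zero hd (Nat.cast_add_one_ne_zero _)
    have hdeg_sub : degree d = degree (d - single i 1) + 1 := by
      conv_lhs => rw [← sub_add_single_one_cancel hdi]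
      rw [map_add, degree_single]
    have hle := hord.trans (order_le hcoeff)
    rw [← hdeg, hdeg_sub, Nat.cast_le] at hle
    omega

variable (i : Fin n) (D : MvPowerSeries (Fin n) K →ₗ[K] MvPowerSeries (Fin n) K)

theorem eq_of_substZero_eq (hD : ∀ f, f.order ≤ (D f - pderiv K i f).order)
    {g g' : MvPowerSeries (Fin n) K} (hg : D g = 0) (hg' : D g' = 0)
    (h : substZero i g = substZero i g') : g = g' := by
  refine sub_eq_zero.1 (eq_zero_of_order_le_order_pderiv (i := i) ?_ ?_)
  · simpa only [map_sub, hg, hg', sub_self, zero_sub, order_neg] using hD (g - g')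
  · rw [← substZeroAlgHom_apply, map_sub, substZeroAlgHom_apply, substZeroAlgHom_apply, h,
      sub_self]

theorem exists_map_eq_zero_and_substZero_eq (hD : ∀ f, f.order ≤ (D f - pderiv K i f).order)
    {g₀ : MvPowerSeries (Fin n) K}
    (hg₀ : ∀ d : Fin n →₀ ℕ, d i ≠ 0 → coeff d g₀ = 0) :
    ∃ g, D g = 0 ∧ substZero i g = g₀ := by
  obtain ⟨g, hg : g₀ - pintegral i (D g - pderiv K i g) = g⟩ :=
    exists_fixedPoint_of_le_order_sub (fun f => g₀ - pintegral i (D f - pderiv K i f))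
      fun f f' => by
        have : g₀ - pintegral i (D f - pderiv K i f) - (g₀ - pintegral i (D f' - pderiv K i f'))
            = pintegral i (D (f' - f) - pderiv K i (f' - f)) := by
          simp only [map_sub]
          abel
        rw [this, ← neg_sub, order_neg]
        exact le_trans (by gcongr; exact hD _) (order_add_one_le_order_pintegral _ _)
  refine ⟨g, ?_, ?_⟩
  · have : pderiv K i g = pderiv K i g - D g := by
      conv_lhs => rw [← hg]
      rw [map_sub, pderiv_pintegral, pderiv_eq_zero_of_coeff_eq_zero hg₀, zero_sub, neg_sub]
    exact sub_eq_self.1 this.symm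
  · rw [← hg, ← substZeroAlgHom_apply, map_sub, substZeroAlgHom_apply, substZeroAlgHom_apply,
      substZero_pintegral, sub_zero, substZero_eq_self hg₀]

end kernel

/-- Let `D` be a derivation of `K[[x₁,…,xₙ]]` whose lowest homogeneous
component is `∂/∂x₁`.  Then substitution of `0` for `x₁` is a `K`-algebra
homomorphism which restricts to an isomorphism `ker D ≃ K[[x₂,…,xₙ]]` (the
latter realized as the subalgebra of `x₁`-free power series): in particular,
for every `x₁`-free `g₀` there is a unique `g ∈ ker D` with
`g(0,x₂,…,xₙ) = g₀`. -/
theorem stmt4 {K : Type*} [Field K] [CharZero K] (n : ℕ) (hn : 1 ≤ n)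
    (D : Derivation K (MvPowerSeries (Fin n) K) (MvPowerSeries (Fin n) K))
    (hD : ∀ f : MvPowerSeries (Fin n) K, ∀ k : ℕ,
      (∀ d : Fin n →₀ ℕ, tdeg d < k → MvPowerSeries.coeff d f = 0) →
      (∀ d : Fin n →₀ ℕ, tdeg d < k →
        MvPowerSeries.coeff d (D f - formalPDeriv ⟨0, hn⟩ f) = 0)) :
    (∀ a b : MvPowerSeries (Fin n) K,
      substZero ⟨0, hn⟩ (a + b) = substZero ⟨0, hn⟩ a + substZero ⟨0, hn⟩ b) ∧
    (∀ a b : MvPowerSeries (Fin n) K,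
      substZero ⟨0, hn⟩ (a * b) = substZero ⟨0, hn⟩ a * substZero ⟨0, hn⟩ b) ∧
    (∀ c : K, substZero ⟨0, hn⟩ (algebraMap K (MvPowerSeries (Fin n) K) c) =
      algebraMap K (MvPowerSeries (Fin n) K) c) ∧
    (∀ g₀ : MvPowerSeries (Fin n) K,
      (∀ d : Fin n →₀ ℕ, d ⟨0, hn⟩ ≠ 0 → MvPowerSeries.coeff d g₀ = 0) →
      ∃! g : MvPowerSeries (Fin n) K, D g = 0 ∧ substZero ⟨0, hn⟩ g = g₀) := by
  set i : Fin n := ⟨0, hn⟩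
  have hD_order : ∀ f, f.order ≤ (D f - pderiv K i f).order := by
    simpa only [formalPDeriv_eq_pderiv] using
      order_le_order_of_forall_tdeg_lt (fun f => D f - formalPDeriv i f) hD
  refine ⟨map_add (substZeroAlgHom i), map_mul (substZeroAlgHom i), (substZeroAlgHom i).commutes,
    fun g₀ hg₀ => ?_⟩
  obtain ⟨g, hg⟩ := exists_map_eq_zero_and_substZero_eq i D hD_order hg₀
  exact ⟨g, hg, fun g' hg' => eq_of_substZero_eq i D hD_order hg'.1 hg.1 (hg'.2.trans hg.2.symm)⟩
end

section
/- Let K be an algebraically closed field of characteristic 0 and let A be a finitely generated integral domain over K. Suppose ∂₁ and ∂₂ are nonzero locally nilpotent K-derivations of A with ker ∂₁ ≠ ker ∂₂. Then there exist f₁ ∈ ker ∂₁ and f₂ ∈ ker ∂₂ such that the derivation f₁∂₁ + f₂∂₂ is not locally finite. In particular, the K-linear span of the locally nilpotent derivations of A contains a derivation that is not locally finite. -/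
/-- A `K`-derivation `δ` of `A` is locally finite if every `a ∈ A` lies in a
finite-dimensional `K`-subspace of `A` invariant under `δ`. -/
def IsLocFin {K A : Type*} [Field K] [CommRing A] [Algebra K A]
    (δ : Derivation K A A) : Prop :=
  ∀ a : A, ∃ V : Submodule K A, a ∈ V ∧ FiniteDimensional K V ∧ ∀ v ∈ V, δ v ∈ V

/-!
Pick `a ∈ ker d₁ \ ker d₂` and `b ∈ ker d₂ \ ker d₁`; they exist because a derivation vanishing
on the kernel of a locally nilpotent `d` and on a local slice `r` of `d` vanishes, as
`(d r)ᴺ x` is a polynomial in `r` over `ker d`. Put `δ = a² d₁ + b² d₂`, so that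
`δ a = b² · d₂ a` and `δ b = a² · d₁ b`.

If `δ` were locally finite, `A` would be graded by the generalized eigenspaces of `δ`, and
`δ = σ + ν` with `σ` the derivation multiplying degree `μ` by `μ`, and `ν` locally nilpotent and
commuting with `δ`. The `ν`-degree is additive and does not increase under `δ`, so the two
identities force `ν a = ν b = 0`, i.e. they hold for `σ`. Measuring supports by their width along
linear forms `K → ℚ`, which is additive on products and does not increase under `σ`, the same
identities force `a` to be homogeneous: `δ a = μ a`. Then `d₁ (b² · d₂ a) = d₁ (δ a) = 0`, and
since `ker d₁` is factorially closed, `d₁ b = 0`, a contradiction.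
-/

open Finset Module End

namespace Derivation

section Leibniz

variable {R A : Type*} [CommRing R] [CommRing A] [Algebra R A] (D : Derivation R A A)

theorem sub_smul_one_apply_mul (a b : R) (x y : A) :
    (D.toLinearMap - (a + b) • 1) (x * y) =
      (D.toLinearMap - a • 1) x * y + x * (D.toLinearMap - b • 1) y := by
  simp only [LinearMap.sub_apply, LinearMap.smul_apply, one_apply, coeFn_coe,
    leibniz, smul_eq_mul]
  simp only [Algebra.smul_def, map_add]
  ring

theorem sub_smul_one_pow_apply_mul (a b : R) (n : ℕ) (x y : A) :
    ((D.toLinearMap - (a + b) • 1) ^ n) (x * y) =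
      ∑ ij ∈ antidiagonal n, n.choose ij.1 •
        (((D.toLinearMap - a • 1) ^ ij.1) x * ((D.toLinearMap - b • 1) ^ ij.2) y) := by
  induction n with
  | zero => simp
  | succ n ih =>
    rw [sum_antidiagonal_choose_succ_nsmul
      (fun i j ↦ ((D.toLinearMap - a • 1) ^ i) x * ((D.toLinearMap - b • 1) ^ j) y) n]
    simp only [pow_succ', mul_apply, ih, map_sum, map_nsmul, sub_smul_one_apply_mul,
      nsmul_add, sum_add_distrib]
    rw [add_comm, add_left_cancel_iff]
    refine sum_congr rfl fun ⟨i, j⟩ hij ↦ ?_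
    rw [Nat.choose_symm_of_eq_add (mem_antidiagonal.mp hij).symm]

theorem sub_smul_one_pow_apply_mul_eq_zero {a b : R} {k l : ℕ} {x y : A}
    (hx : ((D.toLinearMap - a • 1) ^ (k + 1)) x = 0)
    (hy : ((D.toLinearMap - b • 1) ^ (l + 1)) y = 0) :
    ((D.toLinearMap - (a + b) • 1) ^ (k + l + 1)) (x * y) = 0 := by
  rw [sub_smul_one_pow_apply_mul]
  refine sum_eq_zero fun ⟨i, j⟩ hij ↦ ?_
  obtain hi | hj : k + 1 ≤ i ∨ l + 1 ≤ j := by rw [HasAntidiagonal.mem_antidiagonal] at hij; omega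
  · rw [pow_map_zero_of_le hi hx, zero_mul, smul_zero]
  · rw [pow_map_zero_of_le hj hy, mul_zero, smul_zero]

theorem mul_mem_maxGenEigenspace {a b : R} {x y : A}
    (hx : x ∈ maxGenEigenspace D.toLinearMap a) (hy : y ∈ maxGenEigenspace D.toLinearMap b) :
    x * y ∈ maxGenEigenspace D.toLinearMap (a + b) := by
  rw [mem_maxGenEigenspace] at hx hy ⊢
  obtain ⟨k, hk⟩ := hx
  obtain ⟨l, hl⟩ := hy
  exact ⟨k + l + 1, D.sub_smul_one_pow_apply_mul_eq_zero
    (pow_map_zero_of_le k.le_succ hk) (pow_map_zero_of_le l.le_succ hl)⟩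

instance gradedMonoid_maxGenEigenspace :
    SetLike.GradedMonoid (maxGenEigenspace D.toLinearMap) where
  one_mem := mem_maxGenEigenspace _ _ _ |>.mpr ⟨1, by simp⟩
  mul_mem _ _ _ _ := D.mul_mem_maxGenEigenspace

theorem pow_apply_mul (n : ℕ) (x y : A) :
    (D.toLinearMap ^ n) (x * y) =
      ∑ ij ∈ antidiagonal n, n.choose ij.1 •
        ((D.toLinearMap ^ ij.1) x * (D.toLinearMap ^ ij.2) y) := by
  simpa using D.sub_smul_one_pow_apply_mul 0 0 n x y

theorem pow_add_apply_mul {p q : ℕ} {x y : A} (hx : (D.toLinearMap ^ (p + 1)) x = 0)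
    (hy : (D.toLinearMap ^ (q + 1)) y = 0) :
    (D.toLinearMap ^ (p + q)) (x * y) =
      (p + q).choose p • ((D.toLinearMap ^ p) x * (D.toLinearMap ^ q) y) := by
  rw [pow_apply_mul, sum_eq_single (p, q)]
  · rintro ⟨i, j⟩ hij hne
    obtain hi | hj : p + 1 ≤ i ∨ q + 1 ≤ j := by
      rw [HasAntidiagonal.mem_antidiagonal] at hij
      by_contra!
      exact hne (Prod.ext (by omega) (by omega))
    · rw [pow_map_zero_of_le hi hx, zero_mul, smul_zero]
    · rw [pow_map_zero_of_le hj hy, mul_zero, smul_zero]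
  · simp

end Leibniz

end Derivation

section LocallyNilpotent

variable {R A : Type*} [CommRing R] [CommRing A] [Algebra R A] {d : Derivation R A A}

theorem isLND_iff : IsLND d ↔ ∀ a, ∃ n, (d.toLinearMap ^ n) a = 0 :=
  ⟨fun h a ↦ (h a).imp fun _ ↦ And.right,
    fun h a ↦ (h a).elim fun n hn ↦ ⟨n + 1, Nat.le_add_left 1 n, pow_map_zero_of_le n.le_succ hn⟩⟩

theorem IsLND.smul {f : A} (hd : IsLND d) (hf : d f = 0) : IsLND (f • d) := by
  have pow_apply (n : ℕ) (x : A) :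
      ((f • d).toLinearMap ^ n) x = f ^ n * (d.toLinearMap ^ n) x := by
    induction n generalizing x with
    | zero => simp
    | succ n ih =>
      rw [pow_succ', mul_apply, ih, pow_succ' d.toLinearMap, mul_apply]
      simp only [Derivation.coe_smul_linearMap, LinearMap.smul_apply, Derivation.coeFn_coe,
        Derivation.leibniz, smul_eq_mul, Derivation.leibniz_pow, hf, mul_zero, nsmul_zero, add_zero]
      ring
  intro x
  obtain ⟨n, hn, hx⟩ := hd x
  exact ⟨n, hn, by rw [pow_apply, hx, mul_zero]⟩

variable (d) in
/-- The degree of `x` with respect to `d`: the largest `n` with `dⁿ x ≠ 0` when `d` is locally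
nilpotent and `x ≠ 0`. -/
noncomputable def Derivation.lndDegree (x : A) : ℕ :=
  sInf {n | (d.toLinearMap ^ (n + 1)) x = 0}

open Derivation

theorem IsLND.pow_lndDegree_succ_apply (hd : IsLND d) (x : A) :
    (d.toLinearMap ^ (d.lndDegree x + 1)) x = 0 :=
  Nat.sInf_mem (s := {n | (d.toLinearMap ^ (n + 1)) x = 0}) <|
    (isLND_iff.mp hd x).elim fun n hn ↦ ⟨n, pow_map_zero_of_le n.le_succ hn⟩

theorem Derivation.lndDegree_le {x : A} {n : ℕ} (h : (d.toLinearMap ^ (n + 1)) x = 0) :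
    d.lndDegree x ≤ n :=
  Nat.sInf_le h

theorem Derivation.pow_lndDegree_apply_ne_zero {x : A} (hx : x ≠ 0) :
    (d.toLinearMap ^ d.lndDegree x) x ≠ 0 := by
  rcases h : d.lndDegree x with _ | n
  · simpa using hx
  · exact Nat.notMem_of_lt_sInf (show n < d.lndDegree x by omega)

theorem IsLND.lndDegree_eq_zero_iff (hd : IsLND d) {x : A} : d.lndDegree x = 0 ↔ d x = 0 :=
  ⟨fun h ↦ by simpa [h] using hd.pow_lndDegree_succ_apply x,
    fun h ↦ Nat.le_zero.mp (lndDegree_le (by simpa using h))⟩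

theorem IsLND.lndDegree_apply_le_of_commute (hd : IsLND d) {f : Module.End R A}
    (hf : Commute d.toLinearMap f) (x : A) : d.lndDegree (f x) ≤ d.lndDegree x :=
  lndDegree_le <| by
    rw [← mul_apply, (hf.pow_left _).eq, mul_apply, hd.pow_lndDegree_succ_apply, map_zero]

variable [IsDomain A] [CharZero A]

theorem IsLND.lndDegree_mul (hd : IsLND d) {x y : A} (hx : x ≠ 0) (hy : y ≠ 0) :
    d.lndDegree (x * y) = d.lndDegree x + d.lndDegree y := by
  refine le_antisymm (lndDegree_le ?_) ?_
  · simpa using d.sub_smul_one_pow_apply_mul_eq_zero (a := 0) (b := 0)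
      (by simpa using hd.pow_lndDegree_succ_apply x) (by simpa using hd.pow_lndDegree_succ_apply y)
  · by_contra! hlt
    have hlead := d.pow_add_apply_mul (hd.pow_lndDegree_succ_apply x)
      (hd.pow_lndDegree_succ_apply y)
    rw [pow_map_zero_of_le hlt (hd.pow_lndDegree_succ_apply _), nsmul_eq_mul] at hlead
    exact mul_ne_zero (Nat.cast_ne_zero.mpr (Nat.choose_pos le_self_add).ne')
      (mul_ne_zero (pow_lndDegree_apply_ne_zero hx) (pow_lndDegree_apply_ne_zero hy)) hlead.symm

theorem IsLND.apply_eq_zero_of_apply_eq_sq_mul (hd : IsLND d)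
    {f : Module.End R A} (hf : Commute d.toLinearMap f) {x y c e : A} (hx : x ≠ 0) (hy : y ≠ 0)
    (hc : c ≠ 0) (he : e ≠ 0) (hfx : f x = y ^ 2 * c) (hfy : f y = x ^ 2 * e) : d x = 0 := by
  have hdeg {z w g : A} (hw : w ≠ 0) (hg : g ≠ 0) (h : f z = w ^ 2 * g) :
      2 * d.lndDegree w ≤ d.lndDegree z := by
    have := hd.lndDegree_apply_le_of_commute hf z
    rw [h, pow_two, hd.lndDegree_mul (mul_ne_zero hw hw) hg, hd.lndDegree_mul hw hw] at this
    omega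
  have := hdeg hy hc hfx
  have := hdeg hx he hfy
  exact hd.lndDegree_eq_zero_iff.mp (by omega)

end LocallyNilpotent

section Slice

open Derivation

variable {K A : Type*} [Field K] [CommRing A] [Algebra K A] {d : Derivation K A A}

theorem IsLND.lndDegree_apply_lt (hd : IsLND d) {x : A} (hx : d x ≠ 0) :
    d.lndDegree (d x) < d.lndDegree x := by
  obtain ⟨n, hn⟩ : ∃ n, d.lndDegree x = n + 1 :=
    Nat.exists_eq_succ_of_ne_zero (mt hd.lndDegree_eq_zero_iff.mp hx)
  have := hd.pow_lndDegree_succ_apply x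
  rw [hn, pow_succ, mul_apply] at this
  exact hn ▸ Nat.lt_succ_of_le (lndDegree_le this)

theorem IsLND.exists_slice (hd : IsLND d) (h0 : d ≠ 0) : ∃ r, d r ≠ 0 ∧ d (d r) = 0 := by
  obtain ⟨x, hx⟩ : ∃ x, d x ≠ 0 := by
    by_contra! h
    exact h0 (Derivation.ext h)
  obtain ⟨n, hn⟩ : ∃ n, d.lndDegree x = n + 1 :=
    Nat.exists_eq_succ_of_ne_zero (mt hd.lndDegree_eq_zero_iff.mp hx)
  refine ⟨(d.toLinearMap ^ n) x, ?_, ?_⟩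
  · have := pow_lndDegree_apply_ne_zero (d := d) (x := x) (ne_of_apply_ne d (by simpa))
    rwa [hn, pow_succ', mul_apply] at this
  · simpa [hn, pow_succ'] using hd.pow_lndDegree_succ_apply x

variable [CharZero K]

theorem Derivation.apply_inv_smul_mul_pow_succ {c r : A} (hc : d c = 0) (j : ℕ) :
    d (((j + 1 : K)⁻¹ • c) * r ^ (j + 1)) = c * r ^ j * d r := by
  have hj : algebraMap K A (j + 1 : K)⁻¹ * (j + 1 : ℕ) = 1 := by
    rw [← _root_.map_natCast (algebraMap K A), ← map_mul, Nat.cast_succ,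
      inv_mul_cancel₀ (Nat.cast_add_one_ne_zero j), map_one]
  rw [leibniz, leibniz_pow, Derivation.map_smul, hc]
  simp only [Nat.add_sub_cancel, smul_eq_mul, Algebra.smul_def]
  linear_combination (c * r ^ j * d r) * hj

theorem IsLND.exists_pow_mul_eq_sum (hd : IsLND d) {r : A} (hr : d (d r) = 0) (x : A) :
    ∃ (N n : ℕ) (c : ℕ → A), (∀ j, d (c j) = 0) ∧ d r ^ N * x = ∑ j ∈ range n, c j * r ^ j := by
  induction hdeg : d.lndDegree x using Nat.strong_induction_on generalizing x with
  | _ m ih =>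
    by_cases hx : d x = 0
    · exact ⟨0, 1, fun _ ↦ x, fun _ ↦ hx, by simp⟩
    obtain ⟨N, n, c, hc, hdx⟩ := ih _ (hdeg ▸ hd.lndDegree_apply_lt hx) (d x) rfl
    set W := ∑ j ∈ range n, ((j + 1 : K)⁻¹ • c j) * r ^ (j + 1)
    have hW : d W = d r ^ N * d x * d r := by
      simp only [W, map_sum, apply_inv_smul_mul_pow_succ (hc _), hdx, sum_mul]
    refine ⟨N + 1, n + 1, fun | 0 => d r ^ (N + 1) * x - W | j + 1 => (j + 1 : K)⁻¹ • c j,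
      fun | 0 => ?_ | j + 1 => ?_, ?_⟩
    · simp only [pow_succ, map_sub, leibniz, smul_eq_mul, hr, mul_zero, leibniz_pow, nsmul_zero,
        add_zero, hW]
      ring
    · simp [hc]
    · rw [sum_range_succ']
      simp [W]

variable [IsDomain A]

theorem IsLND.eq_zero_of_apply_eq_zero (hd : IsLND d) {r : A} (hr : d r ≠ 0) (hrr : d (d r) = 0)
    {E : Derivation K A A} (hE : ∀ z, d z = 0 → E z = 0) (hEr : E r = 0) : E = 0 := by
  ext x
  obtain ⟨N, n, c, hc, hx⟩ := hd.exists_pow_mul_eq_sum hrr x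
  have hsum : E (∑ j ∈ range n, c j * r ^ j) = 0 := by
    simp [leibniz, leibniz_pow, hE _ (hc _), hEr]
  have hmul : E (d r ^ N * x) = d r ^ N * E x := by
    simp [leibniz, leibniz_pow, hE _ hrr]
  rw [hx, hsum] at hmul
  exact (mul_eq_zero.mp hmul.symm).resolve_left (pow_ne_zero _ hr)

theorem IsLND.ker_le_of_ker_le {d₁ : Derivation K A A} (hd : IsLND d) (hd₁ : d₁ ≠ 0)
    (hle : LinearMap.ker d.toLinearMap ≤ LinearMap.ker d₁.toLinearMap) :
    LinearMap.ker d₁.toLinearMap ≤ LinearMap.ker d.toLinearMap := by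
  have hle' (z : A) (hz : d z = 0) : d₁ z = 0 := hle hz
  have h0 : d ≠ 0 := by
    rintro rfl
    exact hd₁ (Derivation.ext fun x ↦ hle' x rfl)
  obtain ⟨r, hr, hrr⟩ := hd.exists_slice h0
  -- `d r • d₁ - d₁ r • d` kills `ker d` and `r`, hence vanishes
  have hE := hd.eq_zero_of_apply_eq_zero hr hrr (E := d r • d₁ - d₁ r • d)
    (fun z hz ↦ by simp [hz, hle' z hz]) (by simp [mul_comm])
  intro a (ha : d₁ a = 0)
  have h : d₁ r * d a = 0 := by simpa [ha] using congr($hE a)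
  refine (mul_eq_zero.mp h).resolve_left fun h₁ ↦ hd₁ (Derivation.ext fun x ↦ ?_)
  simpa [h₁, hr] using congr($hE x)

end Slice

section GradingDerivation

open DirectSum

variable {K A : Type*} [Field K] [CommRing A] [Algebra K A] [DecidableEq K]
  (𝒜 : K → Submodule K A) [GradedAlgebra 𝒜]

noncomputable def gradingEnd : Module.End K A :=
  toModule K K A (fun i ↦ i • (𝒜 i).subtype) ∘ₗ (decomposeLinearEquiv 𝒜).toLinearMap

variable {𝒜} in
theorem gradingEnd_apply_of_mem {i : K} {x : A} (hx : x ∈ 𝒜 i) : gradingEnd 𝒜 x = i • x := by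
  simp [gradingEnd, decomposeLinearEquiv_apply, decompose_of_mem 𝒜 hx, ← lof_eq_of K,
    toModule_lof]

noncomputable def gradingDerivation : Derivation K A A :=
  Derivation.mk' (gradingEnd 𝒜) fun a b ↦ by
    induction a using Decomposition.inductionOn 𝒜 generalizing b with
    | zero => simp
    | add a a' ha ha' => simp only [add_mul, map_add, ha, ha', add_smul, smul_add]; abel
    | homogeneous a =>
      induction b using Decomposition.inductionOn 𝒜 with
      | zero => simp
      | add b b' hb hb' => simp only [mul_add, map_add, hb, hb', add_smul, smul_add]; abel
      | homogeneous b =>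
        rw [gradingEnd_apply_of_mem (SetLike.mul_mem_graded a.2 b.2), gradingEnd_apply_of_mem a.2,
          gradingEnd_apply_of_mem b.2, add_smul, smul_eq_mul, smul_eq_mul, mul_smul_comm,
          mul_smul_comm, mul_comm (b : A)]
        abel

variable {𝒜}

theorem gradingDerivation_apply_of_mem {i : K} {x : A} (hx : x ∈ 𝒜 i) :
    gradingDerivation 𝒜 x = i • x :=
  gradingEnd_apply_of_mem hx

theorem coe_decompose_gradingDerivation (x : A) (i : K) :
    (decompose 𝒜 (gradingDerivation 𝒜 x) i : A) = i • (decompose 𝒜 x i : A) := by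
  induction x using Decomposition.inductionOn 𝒜 with
  | zero => simp
  | add x x' hx hx' => simp [decompose_add, hx, hx', smul_add]
  | @homogeneous j x =>
    rw [gradingDerivation_apply_of_mem x.2]
    by_cases h : j = i
    · subst h
      rw [decompose_of_mem_same 𝒜 (Submodule.smul_mem _ _ x.2), decompose_of_mem_same 𝒜 x.2]
    · rw [decompose_of_mem_ne 𝒜 (Submodule.smul_mem _ _ x.2) h, decompose_of_mem_ne 𝒜 x.2 h,
        smul_zero]

end GradingDerivation

section Weights

open DirectSum

variable {ι A σ : Type*} [DecidableEq ι] [AddCommGroup ι] [CommRing A]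
  [SetLike σ A] [AddSubgroupClass σ A] {𝒜 : ι → σ} [GradedRing 𝒜]
  [∀ i (x : 𝒜 i), Decidable (x ≠ 0)]

variable (𝒜) in
theorem support_decompose_nonempty {x : A} (hx : x ≠ 0) : (decompose 𝒜 x).support.Nonempty := by
  rw [Finset.nonempty_iff_ne_empty, Ne, DFinsupp.support_eq_empty, ← decompose_zero,
    (decompose 𝒜).injective.eq_iff]
  exact hx

theorem coe_decompose_mul_apply (x y : A) (k : ι) :
    (decompose 𝒜 (x * y) k : A) = ∑ p ∈ (decompose 𝒜 x).support ×ˢ (decompose 𝒜 y).support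
      with p.1 + p.2 = k, (decompose 𝒜 x p.1 * decompose 𝒜 y p.2 : A) := by
  rw [decompose_mul, coe_mul_apply]

theorem sum_coe_decompose_ne_zero {x : A} {s : Finset ι} (hs : s ⊆ (decompose 𝒜 x).support)
    (hne : s.Nonempty) : ∑ i ∈ s, (decompose 𝒜 x i : A) ≠ 0 := by
  obtain ⟨i, hi⟩ := hne
  intro h
  have := congr_arg (fun z ↦ (decompose 𝒜 z i : A)) h
  simp only [decompose_sum, decompose_coe, DirectSum.sum_apply, of_apply, sum_dite_eq', hi,
    ↓reduceIte, decompose_zero, DirectSum.zero_apply, ZeroMemClass.coe_zero,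
    ZeroMemClass.coe_eq_zero] at this
  exact DFinsupp.mem_support_iff.mp (hs hi) this

variable [Module ℚ ι]

variable (𝒜) in
noncomputable def topWeight (φ : Dual ℚ ι) (x : A) : ℚ :=
  if h : (decompose 𝒜 x).support.Nonempty then (decompose 𝒜 x).support.sup' h φ else 0

variable (𝒜) in
noncomputable def weightWidth (φ : Dual ℚ ι) (x : A) : ℚ :=
  topWeight 𝒜 φ x + topWeight 𝒜 (-φ) x

theorem le_topWeight (φ : Dual ℚ ι) {x : A} {i : ι} (hi : i ∈ (decompose 𝒜 x).support) :
    φ i ≤ topWeight 𝒜 φ x := by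
  rw [topWeight, dif_pos ⟨i, hi⟩]
  exact le_sup' φ hi

theorem exists_topWeight (φ : Dual ℚ ι) {x : A} (hx : x ≠ 0) :
    ∃ i ∈ (decompose 𝒜 x).support, φ i = topWeight 𝒜 φ x := by
  rw [topWeight, dif_pos (support_decompose_nonempty 𝒜 hx)]
  obtain ⟨i, hi, h⟩ := exists_mem_eq_sup' (support_decompose_nonempty 𝒜 hx) φ
  exact ⟨i, hi, h.symm⟩

theorem topWeight_le_of_support_subset (φ : Dual ℚ ι) {x y : A} (hy : y ≠ 0)
    (h : (decompose 𝒜 y).support ⊆ (decompose 𝒜 x).support) :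
    topWeight 𝒜 φ y ≤ topWeight 𝒜 φ x := by
  rw [topWeight, dif_pos (support_decompose_nonempty 𝒜 hy)]
  exact sup'_le _ _ fun j hj ↦ le_topWeight φ (h hj)

theorem topWeight_mul_le (φ : Dual ℚ ι) {x y : A} (hxy : x * y ≠ 0) :
    topWeight 𝒜 φ (x * y) ≤ topWeight 𝒜 φ x + topWeight 𝒜 φ y := by
  rw [topWeight, dif_pos (support_decompose_nonempty 𝒜 hxy)]
  refine sup'_le _ _ fun k hk ↦ ?_
  have hk' : (decompose 𝒜 (x * y) k : A) ≠ 0 := by simpa using DFinsupp.mem_support_iff.mp hk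
  rw [coe_decompose_mul_apply] at hk'
  obtain ⟨p, hp, -⟩ := exists_ne_zero_of_sum_ne_zero hk'
  rw [mem_filter, mem_product] at hp
  rw [← hp.2, map_add]
  exact add_le_add (le_topWeight φ hp.1.1) (le_topWeight φ hp.1.2)

theorem add_topWeight_le_topWeight_mul [IsDomain A] (φ : Dual ℚ ι) {x y : A} (hx : x ≠ 0)
    (hy : y ≠ 0) : topWeight 𝒜 φ x + topWeight 𝒜 φ y ≤ topWeight 𝒜 φ (x * y) := by
  set M := topWeight 𝒜 φ x
  set N := topWeight 𝒜 φ y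
  set P := (decompose 𝒜 x).support ×ˢ (decompose 𝒜 y).support
  set S := (P.image fun p ↦ p.1 + p.2).filter (φ · = M + N)
  -- the components of `x * y` of top weight come from the top weight components of `x` and `y`
  have htop : ∑ k ∈ S, (decompose 𝒜 (x * y) k : A) =
      (∑ i ∈ (decompose 𝒜 x).support with φ i = M, (decompose 𝒜 x i : A)) *
        ∑ j ∈ (decompose 𝒜 y).support with φ j = N, (decompose 𝒜 y j : A) := by
    simp_rw [coe_decompose_mul_apply, sum_fiberwise_eq_sum_filter, sum_mul_sum, ← sum_product']
    refine sum_congr (Finset.ext fun p ↦ ?_) fun _ _ ↦ rfl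
    simp only [S, mem_filter, mem_image, mem_product, map_add]
    constructor
    · rintro ⟨hp, -, h⟩
      have := le_topWeight φ hp.1
      have := le_topWeight φ hp.2
      exact ⟨⟨hp.1, by linarith⟩, hp.2, by linarith⟩
    · rintro ⟨⟨h1, hM⟩, h2, hN⟩
      exact ⟨⟨h1, h2⟩, ⟨p, mem_product.mpr ⟨h1, h2⟩, rfl⟩, by rw [hM, hN]⟩
  have hne : ∑ k ∈ S, (decompose 𝒜 (x * y) k : A) ≠ 0 := by
    obtain ⟨i, hi, hiM⟩ := exists_topWeight (𝒜 := 𝒜) φ hx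
    obtain ⟨j, hj, hjN⟩ := exists_topWeight (𝒜 := 𝒜) φ hy
    rw [htop]
    exact mul_ne_zero (sum_coe_decompose_ne_zero (filter_subset _ _) ⟨i, mem_filter.mpr ⟨hi, hiM⟩⟩)
      (sum_coe_decompose_ne_zero (filter_subset _ _) ⟨j, mem_filter.mpr ⟨hj, hjN⟩⟩)
  obtain ⟨k, hkS, hk⟩ := exists_ne_zero_of_sum_ne_zero hne
  rw [← (mem_filter.mp hkS).2]
  exact le_topWeight φ (DFinsupp.mem_support_iff.mpr (by simpa using hk))

theorem topWeight_mul [IsDomain A] (φ : Dual ℚ ι) {x y : A} (hx : x ≠ 0) (hy : y ≠ 0) :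
    topWeight 𝒜 φ (x * y) = topWeight 𝒜 φ x + topWeight 𝒜 φ y :=
  (topWeight_mul_le φ (mul_ne_zero hx hy)).antisymm (add_topWeight_le_topWeight_mul φ hx hy)

theorem weightWidth_mul [IsDomain A] (φ : Dual ℚ ι) {x y : A} (hx : x ≠ 0) (hy : y ≠ 0) :
    weightWidth 𝒜 φ (x * y) = weightWidth 𝒜 φ x + weightWidth 𝒜 φ y := by
  simp only [weightWidth, topWeight_mul _ hx hy]
  ring

theorem weightWidth_nonneg (φ : Dual ℚ ι) {x : A} (hx : x ≠ 0) : 0 ≤ weightWidth 𝒜 φ x := by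
  obtain ⟨i, hi⟩ := support_decompose_nonempty 𝒜 hx
  have h₁ := le_topWeight φ hi
  have h₂ := le_topWeight (-φ) hi
  rw [LinearMap.neg_apply] at h₂
  rw [weightWidth]
  linarith

theorem weightWidth_le_of_support_subset (φ : Dual ℚ ι) {x y : A} (hy : y ≠ 0)
    (h : (decompose 𝒜 y).support ⊆ (decompose 𝒜 x).support) :
    weightWidth 𝒜 φ y ≤ weightWidth 𝒜 φ x :=
  add_le_add (topWeight_le_of_support_subset φ hy h) (topWeight_le_of_support_subset (-φ) hy h)

theorem isHomogeneousElem_of_weightWidth_nonpos {x : A} (hx : x ≠ 0)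
    (h : ∀ φ, weightWidth 𝒜 φ x ≤ 0) : SetLike.IsHomogeneousElem 𝒜 x := by
  obtain ⟨i, hi⟩ := support_decompose_nonempty 𝒜 hx
  have hsupp : (decompose 𝒜 x).support ⊆ {i} := fun j hj ↦ by
    rw [mem_singleton, ← sub_eq_zero]
    refine (forall_dual_apply_eq_zero_iff ℚ (j - i)).mp fun φ ↦ ?_
    have := h φ
    have := h (-φ)
    have := le_topWeight φ hi
    have := le_topWeight φ hj
    have := le_topWeight (-φ) hi
    have := le_topWeight (-φ) hj
    simp only [weightWidth, neg_neg, LinearMap.neg_apply] at *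
    rw [map_sub]
    linarith
  refine ⟨i, ?_⟩
  rw [← sum_support_decompose 𝒜 x, sum_subset hsupp fun j _ hj ↦ by simpa using hj, sum_singleton]
  exact (decompose 𝒜 x i).2

end Weights

section JordanDecomposition

open DirectSum

variable {K A : Type*} [Field K] [CommRing A] [Algebra K A]

theorem isHomogeneousElem_of_gradingDerivation_eq [CharZero K] [IsDomain A] [DecidableEq K]
    {𝒜 : K → Submodule K A} [GradedAlgebra 𝒜] {x y c e : A} (hx : x ≠ 0) (hy : y ≠ 0)
    (hc : c ≠ 0) (he : e ≠ 0) (hσx : gradingDerivation 𝒜 x = y ^ 2 * c)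
    (hσy : gradingDerivation 𝒜 y = x ^ 2 * e) : SetLike.IsHomogeneousElem 𝒜 x := by
  classical
  have hsupp (z : A) :
      (decompose 𝒜 (gradingDerivation 𝒜 z)).support ⊆ (decompose 𝒜 z).support := fun i hi ↦ by
    rw [DFinsupp.mem_support_iff] at hi ⊢
    contrapose! hi
    exact Subtype.ext (by simpa [hi] using coe_decompose_gradingDerivation (𝒜 := 𝒜) z i)
  have hwidth {z w f : A} (hw : w ≠ 0) (hf : f ≠ 0)
      (h : gradingDerivation 𝒜 z = w ^ 2 * f) (φ : Dual ℚ K) :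
      2 * weightWidth 𝒜 φ w + weightWidth 𝒜 φ f ≤ weightWidth 𝒜 φ z := by
    have hne : w ^ 2 * f ≠ 0 := mul_ne_zero (pow_ne_zero 2 hw) hf
    have := weightWidth_le_of_support_subset φ hne (h ▸ hsupp z)
    rwa [pow_two, weightWidth_mul φ (mul_ne_zero hw hw) hf, weightWidth_mul φ hw hw,
      ← two_mul] at this
  refine isHomogeneousElem_of_weightWidth_nonpos hx fun φ ↦ ?_
  have := hwidth hy hc hσx φ
  have := hwidth hx he hσy φ
  have := weightWidth_nonneg (𝒜 := 𝒜) φ hc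
  have := weightWidth_nonneg (𝒜 := 𝒜) φ he
  have := weightWidth_nonneg (𝒜 := 𝒜) φ hy
  linarith

variable [DecidableEq K] (δ : Derivation K A A) [GradedAlgebra (maxGenEigenspace δ.toLinearMap)]

theorem commute_gradingDerivation_maxGenEigenspace :
    Commute (gradingDerivation (maxGenEigenspace δ.toLinearMap)).toLinearMap δ.toLinearMap := by
  refine DirectSum.decompose_lhom_ext (maxGenEigenspace δ.toLinearMap) fun μ ↦
    LinearMap.ext fun x ↦ ?_
  have hδx : δ x ∈ maxGenEigenspace δ.toLinearMap μ :=
    mapsTo_maxGenEigenspace_of_comm (Commute.refl _) μ x.2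
  simp [gradingDerivation_apply_of_mem x.2, gradingDerivation_apply_of_mem hδx]

theorem isLND_sub_gradingDerivation_maxGenEigenspace :
    IsLND (δ - gradingDerivation (maxGenEigenspace δ.toLinearMap)) := by
  set ν := δ - gradingDerivation (maxGenEigenspace δ.toLinearMap)
  have hpow (μ : K) (n : ℕ) {x : A} (hx : x ∈ maxGenEigenspace δ.toLinearMap μ) :
      (ν.toLinearMap ^ n) x = ((δ.toLinearMap - μ • 1) ^ n) x := by
    induction n generalizing x with
    | zero => rfl
    | succ n ih =>
      have hνx : ν.toLinearMap x = (δ.toLinearMap - μ • 1) x := by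
        simp [ν, gradingDerivation_apply_of_mem hx]
      rw [pow_succ, mul_apply, pow_succ, mul_apply, hνx, ih]
      exact sub_mem (mapsTo_maxGenEigenspace_of_comm (Commute.refl _) μ hx)
        (Submodule.smul_mem _ _ hx)
  refine isLND_iff.mpr fun a ↦ ?_
  induction a using DirectSum.Decomposition.inductionOn (maxGenEigenspace δ.toLinearMap) with
  | zero => exact ⟨0, map_zero _⟩
  | @homogeneous μ x =>
    obtain ⟨k, hk⟩ := (mem_maxGenEigenspace _ _ _).mp x.2
    exact ⟨k, (hpow μ k x.2).trans hk⟩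
  | add x y hx hy =>
    obtain ⟨m, hm⟩ := hx
    obtain ⟨n, hn⟩ := hy
    exact ⟨max m n, by rw [map_add, pow_map_zero_of_le (le_max_left m n) hm,
      pow_map_zero_of_le (le_max_right m n) hn, add_zero]⟩

end JordanDecomposition

section LocallyFinite

variable {K A : Type*} [Field K] [CommRing A] [Algebra K A] [IsAlgClosed K]
  {δ : Derivation K A A}

theorem IsLocFin.iSup_maxGenEigenspace_eq_top (h : IsLocFin δ) :
    ⨆ μ, maxGenEigenspace δ.toLinearMap μ = ⊤ := by
  refine eq_top_iff.mpr fun x _ ↦ ?_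
  obtain ⟨V, hxV, _, hδV⟩ := h x
  have hx : (⟨x, hxV⟩ : V) ∈ ⨆ μ, maxGenEigenspace (δ.toLinearMap.restrict hδV) μ := by
    rw [Module.End.iSup_maxGenEigenspace_eq_top]
    trivial
  have := Submodule.mem_map_of_mem (f := V.subtype) hx
  rw [Submodule.map_iSup] at this
  refine SetLike.le_def.mp (iSup_mono fun μ ↦ ?_) this
  rw [maxGenEigenspace, genEigenspace_restrict]
  exact Submodule.map_comap_le _ _

noncomputable abbrev IsLocFin.gradedAlgebra [DecidableEq K] (h : IsLocFin δ) :
    GradedAlgebra (maxGenEigenspace δ.toLinearMap) :=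
  { δ.gradedMonoid_maxGenEigenspace,
    (DirectSum.isInternal_submodule_of_iSupIndep_of_iSup_eq_top
      (independent_maxGenEigenspace _) h.iSup_maxGenEigenspace_eq_top).chooseDecomposition with }

end LocallyFinite

theorem not_isLocFin_sq_smul_add_sq_smul {K A : Type*} [Field K] [IsAlgClosed K] [CharZero K]
    [CommRing A] [IsDomain A] [Algebra K A] {d₁ d₂ : Derivation K A A} (h₁ : IsLND d₁) {a b : A}
    (ha₁ : d₁ a = 0) (ha₂ : d₂ a ≠ 0) (hb₂ : d₂ b = 0) (hb₁ : d₁ b ≠ 0) :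
    ¬ IsLocFin (a ^ 2 • d₁ + b ^ 2 • d₂) := by
  classical
  intro hLF
  have : CharZero A := charZero_of_injective_algebraMap (algebraMap K A).injective
  set δ := a ^ 2 • d₁ + b ^ 2 • d₂
  let := hLF.gradedAlgebra
  set σ := gradingDerivation (maxGenEigenspace δ.toLinearMap)
  have ha : a ≠ 0 := by rintro rfl; simp at ha₂
  have hb : b ≠ 0 := by rintro rfl; simp at hb₁
  have hδa : δ a = b ^ 2 * d₂ a := by simp [δ, ha₁]
  have hδb : δ b = a ^ 2 * d₁ b := by simp [δ, hb₂]
  have hν := isLND_sub_gradingDerivation_maxGenEigenspace δ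
  have hcomm : Commute (δ - σ).toLinearMap δ.toLinearMap :=
    (Commute.refl _).sub_left (commute_gradingDerivation_maxGenEigenspace δ)
  have hσa : σ a = b ^ 2 * d₂ a := by
    rw [← hδa, eq_comm, ← sub_eq_zero]
    exact hν.apply_eq_zero_of_apply_eq_sq_mul hcomm ha hb ha₂ hb₁ hδa hδb
  have hσb : σ b = a ^ 2 * d₁ b := by
    rw [← hδb, eq_comm, ← sub_eq_zero]
    exact hν.apply_eq_zero_of_apply_eq_sq_mul hcomm hb ha hb₁ ha₂ hδb hδa
  obtain ⟨μ, hμ⟩ := isHomogeneousElem_of_gradingDerivation_eq ha hb ha₂ hb₁ hσa hσb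
  have h0 : d₁ (b ^ 2 * d₂ a) = 0 := by
    rw [← hσa, gradingDerivation_apply_of_mem hμ, Derivation.map_smul, ha₁, smul_zero]
  have := h₁.lndDegree_mul (pow_ne_zero 2 hb) ha₂
  rw [h₁.lndDegree_eq_zero_iff.mpr h0, pow_two, h₁.lndDegree_mul hb hb] at this
  exact hb₁ (h₁.lndDegree_eq_zero_iff.mp (by omega))

theorem stmt5_general {K A : Type*} [Field K] [IsAlgClosed K] [CharZero K]
    [CommRing A] [IsDomain A] [Algebra K A]
    (d₁ d₂ : Derivation K A A) (h₁ : IsLND d₁) (h₂ : IsLND d₂)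
    (hne₁ : d₁ ≠ 0) (hne₂ : d₂ ≠ 0)
    (hker : LinearMap.ker d₁.toLinearMap ≠ LinearMap.ker d₂.toLinearMap) :
    (∃ f₁ f₂ : A, d₁ f₁ = 0 ∧ d₂ f₂ = 0 ∧ ¬ IsLocFin (f₁ • d₁ + f₂ • d₂)) ∧
    (∃ δ : Derivation K A A,
      δ ∈ Submodule.span K {δ' : Derivation K A A | IsLND δ'} ∧
      ¬ IsLocFin δ) := by
  obtain ⟨a, ha₁ : d₁ a = 0, ha₂ : d₂ a ≠ 0⟩ := SetLike.not_le_iff_exists.mp fun h ↦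
    hker (h.antisymm (h₁.ker_le_of_ker_le hne₂ h))
  obtain ⟨b, hb₂ : d₂ b = 0, hb₁ : d₁ b ≠ 0⟩ := SetLike.not_le_iff_exists.mp fun h ↦
    hker ((h₂.ker_le_of_ker_le hne₁ h).antisymm h)
  have hf₁ : d₁ (a ^ 2) = 0 := by simp [Derivation.leibniz_pow, ha₁]
  have hf₂ : d₂ (b ^ 2) = 0 := by simp [Derivation.leibniz_pow, hb₂]
  have hLF := not_isLocFin_sq_smul_add_sq_smul h₁ ha₁ ha₂ hb₂ hb₁
  exact ⟨⟨a ^ 2, b ^ 2, hf₁, hf₂, hLF⟩, _, add_mem (Submodule.subset_span (h₁.smul hf₁))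
    (Submodule.subset_span (h₂.smul hf₂)), hLF⟩

/-- If `d₁, d₂` are nonzero locally nilpotent derivations of a finitely
generated domain over an algebraically closed field of characteristic zero
with distinct kernels, then there are `f₁ ∈ ker d₁` and `f₂ ∈ ker d₂` such
that `f₁d₁ + f₂d₂` is not locally finite; in particular the linear span of
the locally nilpotent derivations contains a derivation which is not
locally finite. -/
theorem stmt5 {K A : Type*} [Field K] [IsAlgClosed K] [CharZero K]
    [CommRing A] [IsDomain A] [Algebra K A] [Algebra.FiniteType K A]
    (d₁ d₂ : Derivation K A A) (h₁ : IsLND d₁) (h₂ : IsLND d₂)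
    (hne₁ : d₁ ≠ 0) (hne₂ : d₂ ≠ 0)
    (hker : LinearMap.ker d₁.toLinearMap ≠ LinearMap.ker d₂.toLinearMap) :
    (∃ f₁ f₂ : A, d₁ f₁ = 0 ∧ d₂ f₂ = 0 ∧ ¬ IsLocFin (f₁ • d₁ + f₂ • d₂)) ∧
    (∃ δ : Derivation K A A,
      δ ∈ Submodule.span K {δ' : Derivation K A A | IsLND δ'} ∧
      ¬ IsLocFin δ) :=
  stmt5_general d₁ d₂ h₁ h₂ hne₁ hne₂ hker
end

section
/- Let K be a field of characteristic 0 and d ≥ 2 an integer. Let g be the K-algebra automorphism of K[x,y] determined by g(x) = x + y^d and g(y) = y + (x + y^d)^d (this is the composition exp(y^d·∂/∂x) ∘ exp(x^d·∂/∂y)). Set h = g − id as a K-linear endomorphism of K[x,y]. Then for every i ≥ 0 the polynomial hⁱ(x) is nonzero and the minimal total degree of a monomial occurring in hⁱ(x) equals 1 + i(d−1); consequently the smallest g-stable K-subspace of K[x,y] containing x is infinite-dimensional, and g is not a locally finite automorphism. -/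
/-!
Write `𝔪 = (x, y)`, so that `f ∈ 𝔪ⁿ` iff every monomial of `f` has total degree `≥ n`. Then
`g = id + D + E`, where `D = yᵈ ∂ₓ + xᵈ ∂ᵧ` raises the `𝔪`-adic order by `d - 1` and `E` raises
it by `d`: this holds on `x` and `y` and propagates to products through the Leibniz rule for
`D`, the cross term `D u * D v` being of high enough order because `d ≥ 2`.
Hence `hⁱ x ≡ Dⁱ x` modulo terms of order `> 1 + i(d-1)`, and `Dⁱ x` is homogeneous of degree
`1 + i(d-1)` and nonzero: by Euler's identity its value at `(1, 1)` is `∏_{j<i} (1 + j(d-1))`,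
which does not vanish in characteristic `0`. Vectors of strictly increasing order are linearly
independent, so every `g`-stable subspace containing `x` contains infinitely many independent
vectors `hⁱ x`.
-/

open MvPolynomial

def IsLocFinAut {K A : Type*} [Field K] [CommRing A] [Algebra K A]
    (g : A ≃ₐ[K] A) : Prop :=
  ∀ a : A, ∃ V : Submodule K A, a ∈ V ∧ FiniteDimensional K V ∧ ∀ v ∈ V, g v ∈ V

namespace Ideal

variable {A : Type*} [CommRing A] {I : Ideal A}

theorem mul_mem_pow_of_le {a b : A} {m n p : ℕ} (ha : a ∈ I ^ m) (hb : b ∈ I ^ n)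
    (h : p ≤ m + n) : a * b ∈ I ^ p :=
  Ideal.pow_le_pow_right h (pow_add I m n ▸ Ideal.mul_mem_mul ha hb)

theorem pow_sub_pow_mem_pow {x y : A} {m : ℕ} (hx : x ∈ I) (hy : y ∈ I) (hxy : x - y ∈ I ^ m)
    (n : ℕ) : x ^ n - y ^ n ∈ I ^ (n - 1 + m) := by
  rw [← (Commute.all x y).geom_sum₂_mul]
  refine mul_mem_pow_of_le (Ideal.sum_mem _ fun i hi => ?_) hxy le_rfl
  have hi : i < n := Finset.mem_range.mp hi
  exact mul_mem_pow_of_le (pow_mem_pow hx i) (pow_mem_pow hy _) (by omega)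

end Ideal

theorem Derivation.apply_mem_pow_pred {R A : Type*} [CommSemiring R] [CommRing A] [Algebra R A]
    {I : Ideal A} (D : Derivation R A A) {x : A} {n : ℕ} (hx : x ∈ I ^ n) :
    D x ∈ I ^ (n - 1) := by
  induction hx using Submodule.pow_induction_on_left' with
  | algebraMap r => simp
  | add x y i _ _ hx hy => rw [map_add]; exact add_mem hx hy
  | mem_mul m hm i x hx ih =>
    rw [Derivation.leibniz, smul_eq_mul, smul_eq_mul, Nat.succ_sub_one]
    exact add_mem (Ideal.mul_mem_pow_of_le ((pow_one I).symm ▸ hm) ih (by omega))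
      (Ideal.mul_mem_right _ _ hx)

namespace Module.End

variable {R M : Type*} [Semiring R] [AddCommGroup M] [Module R M] {F : ℕ → Submodule R M} {k : ℕ}

theorem pow_apply_mem_of_shift {T : Module.End R M} (hT : ∀ n, ∀ v ∈ F n, T v ∈ F (n + k))
    {v : M} {n : ℕ} (hv : v ∈ F n) (i : ℕ) : (T ^ i) v ∈ F (n + i * k) := by
  induction i with
  | zero => simpa using hv
  | succ i ih =>
    rw [pow_succ', mul_apply, add_mul, one_mul, ← add_assoc]
    exact hT _ _ ih

theorem pow_apply_sub_pow_apply_mem_of_shift {S T : Module.End R M}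
    (hS : ∀ n, ∀ v ∈ F n, S v ∈ F (n + k)) (hT : ∀ n, ∀ v ∈ F n, T v ∈ F (n + k))
    (hST : ∀ n, ∀ v ∈ F n, S v - T v ∈ F (n + k + 1)) {v : M} {n : ℕ} (hv : v ∈ F n) (i : ℕ) :
    (S ^ i) v - (T ^ i) v ∈ F (n + i * k + 1) := by
  induction i with
  | zero => simp
  | succ i ih =>
    have hsplit : (S ^ (i + 1)) v - (T ^ (i + 1)) v
        = S ((S ^ i) v - (T ^ i) v) + (S ((T ^ i) v) - T ((T ^ i) v)) := by
      rw [pow_succ', pow_succ', mul_apply, mul_apply, map_sub]; abel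
    rw [hsplit, show n + (i + 1) * k + 1 = n + i * k + 1 + k by ring]
    refine add_mem (hS _ _ ih) ?_
    rw [show n + i * k + 1 + k = n + i * k + k + 1 by ring]
    exact hST _ _ (pow_apply_mem_of_shift hT hv i)

end Module.End

theorem linearIndependent_of_mem_filtration {K M : Type*} [Field K] [AddCommGroup M]
    [Module K M] {F : ℕ → Submodule K M} (hF : Antitone F) {f : ℕ → M} {o : ℕ → ℕ}
    (ho : StrictMono o) (hmem : ∀ i, f i ∈ F (o i)) (hnot : ∀ i, f i ∉ F (o i + 1)) :
    LinearIndependent K f := by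
  rw [linearIndependent_iff']
  intro s a hsum i
  induction i using Nat.strong_induction_on with
  | _ i ih =>
  intro hi
  by_contra hai
  refine hnot i ((Submodule.smul_mem_iff _ hai).mp ?_)
  have hrest : a i • f i = -∑ j ∈ s.erase i, a j • f j := by
    rw [eq_neg_iff_add_eq_zero, Finset.add_sum_erase s (fun j => a j • f j) hi, hsum]
  rw [hrest, neg_mem_iff]
  refine Submodule.sum_mem _ fun j hj => ?_
  obtain ⟨hji, hjs⟩ := Finset.mem_erase.mp hj
  rcases lt_or_gt_of_ne hji with hlt | hgt
  · rw [ih j hlt hjs, zero_smul]; exact zero_mem _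
  · exact Submodule.smul_mem _ _ (hF (ho hgt) (hmem j))

namespace MvPolynomial

theorem exists_coeff_ne_zero_of_sub_mem_pow_idealOfVars {σ R : Type*} [CommRing R]
    {f p : MvPolynomial σ R} {n : ℕ} (hp : IsHomogeneous p n) (hp0 : p ≠ 0)
    (hfp : f - p ∈ idealOfVars σ R ^ (n + 1)) :
    ∃ m : σ →₀ ℕ, m.degree = n ∧ coeff m f ≠ 0 := by
  obtain ⟨m, hm⟩ := ne_zero_iff.mp hp0
  have hdeg : m.degree = n := by rw [Finsupp.degree_eq_weight_one]; exact hp hm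
  refine ⟨m, hdeg, fun hf => hm ?_⟩
  have := (mem_pow_idealOfVars_iff' _ _).mp hfp m (by omega)
  rwa [coeff_sub, hf, zero_sub, neg_eq_zero] at this

section OrderRaising

variable {σ R F : Type*} [CommRing R] [FunLike F (MvPolynomial σ R) (MvPolynomial σ R)]
  [AlgHomClass F R (MvPolynomial σ R) (MvPolynomial σ R)] (g : F)
  (D : Derivation R (MvPolynomial σ R) (MvPolynomial σ R)) {k : ℕ}

theorem sub_sub_derivation_mul_mem (hk : 1 ≤ k)
    (hD : ∀ n, ∀ f ∈ idealOfVars σ R ^ n, D f ∈ idealOfVars σ R ^ (n + k))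
    {u v : MvPolynomial σ R} {a b : ℕ} (hu : u ∈ idealOfVars σ R ^ a)
    (hv : v ∈ idealOfVars σ R ^ b) (hEu : g u - u - D u ∈ idealOfVars σ R ^ (a + k + 1))
    (hEv : g v - v - D v ∈ idealOfVars σ R ^ (b + k + 1)) :
    g (u * v) - u * v - D (u * v) ∈ idealOfVars σ R ^ (a + b + k + 1) := by
  set Eu := g u - u - D u
  set Ev := g v - v - D v
  have key : g (u * v) - u * v - D (u * v)
      = u * Ev + D u * D v + D u * Ev + Eu * v + Eu * D v + Eu * Ev := by
    rw [map_mul, Derivation.leibniz, smul_eq_mul, smul_eq_mul,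
      show g u = u + D u + Eu by ring, show g v = v + D v + Ev by ring]
    ring
  have hDu := hD a u hu
  have hDv := hD b v hv
  rw [key]
  exact add_mem (add_mem (add_mem (add_mem (add_mem
    (Ideal.mul_mem_pow_of_le hu hEv (by omega)) (Ideal.mul_mem_pow_of_le hDu hDv (by omega)))
    (Ideal.mul_mem_pow_of_le hDu hEv (by omega))) (Ideal.mul_mem_pow_of_le hEu hv (by omega)))
    (Ideal.mul_mem_pow_of_le hEu hDv (by omega))) (Ideal.mul_mem_pow_of_le hEu hEv (by omega))

variable (hk : 1 ≤ k) (hD : ∀ n, ∀ f ∈ idealOfVars σ R ^ n, D f ∈ idealOfVars σ R ^ (n + k))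
  (hX : ∀ i, g (X i) - X i - D (X i) ∈ idealOfVars σ R ^ (k + 2))
include hk hD hX

theorem sub_sub_derivation_mem_pow_succ (f : MvPolynomial σ R) :
    g f - f - D f ∈ idealOfVars σ R ^ (k + 1) := by
  induction f using MvPolynomial.induction_on with
  | C a =>
    rw [← algebraMap_eq, AlgHomClass.commutes, Derivation.map_algebraMap, sub_self, sub_zero]
    exact zero_mem _
  | add p q hp hq =>
    rw [map_add, map_add, add_sub_add_comm, add_sub_add_comm]; exact add_mem hp hq
  | mul_X p i hp =>
    exact Ideal.pow_le_pow_right (by omega) (sub_sub_derivation_mul_mem g D hk hD (a := 0)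
      (b := 1) (by simp) (by simpa using Ideal.subset_span (Set.mem_range_self i))
      (by simpa using hp) (by convert hX i using 2; omega))

theorem sub_sub_derivation_mem_of_mem {f : MvPolynomial σ R} (hf : f ∈ idealOfVars σ R) :
    g f - f - D f ∈ idealOfVars σ R ^ (1 + k + 1) := by
  induction hf using Submodule.span_induction with
  | mem f hf =>
    obtain ⟨i, rfl⟩ := hf
    convert hX i using 2; omega
  | zero => simp
  | add p q _ _ hp hq =>
    rw [map_add, map_add, add_sub_add_comm, add_sub_add_comm]; exact add_mem hp hq
  | smul a p hp ihp =>
    simpa using sub_sub_derivation_mul_mem g D hk hD (a := 0) (b := 1) (by simp)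
      (by simpa using hp) (by simpa using sub_sub_derivation_mem_pow_succ g D hk hD hX a) ihp

theorem sub_sub_derivation_mem_pow {f : MvPolynomial σ R} {n : ℕ}
    (hf : f ∈ idealOfVars σ R ^ n) : g f - f - D f ∈ idealOfVars σ R ^ (n + k + 1) := by
  induction hf using Submodule.pow_induction_on_left' with
  | algebraMap r => simpa using sub_sub_derivation_mem_pow_succ g D hk hD hX r
  | add p q i _ _ hp hq =>
    rw [map_add, map_add, add_sub_add_comm, add_sub_add_comm]; exact add_mem hp hq
  | mem_mul m hm i x hx ih =>
    convert sub_sub_derivation_mul_mem g D hk hD (by simpa using hm) hx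
      (sub_sub_derivation_mem_of_mem g D hk hD hX hm) ih using 2
    omega

end OrderRaising

section LeadingDerivation

variable {R : Type*} [CommRing R] (d : ℕ)

/-- The first-order part `D` of `g = exp (yᵈ ∂ₓ) ∘ exp (xᵈ ∂ᵧ)`. -/
noncomputable def leadingDerivation :
    Derivation R (MvPolynomial (Fin 2) R) (MvPolynomial (Fin 2) R) :=
  (X 1 ^ d : MvPolynomial (Fin 2) R) • pderiv 0 + (X 0 ^ d : MvPolynomial (Fin 2) R) • pderiv 1

theorem leadingDerivation_apply (f : MvPolynomial (Fin 2) R) :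
    leadingDerivation d f = X 1 ^ d * pderiv 0 f + X 0 ^ d * pderiv 1 f := rfl

theorem leadingDerivation_mem_pow (hd : 1 ≤ d) {f : MvPolynomial (Fin 2) R} {n : ℕ}
    (hf : f ∈ idealOfVars (Fin 2) R ^ n) :
    leadingDerivation d f ∈ idealOfVars (Fin 2) R ^ (n + (d - 1)) := by
  have hXd (i : Fin 2) : (X i : MvPolynomial (Fin 2) R) ^ d ∈ idealOfVars (Fin 2) R ^ d :=
    Ideal.pow_mem_pow (Ideal.subset_span (Set.mem_range_self i)) d
  rw [leadingDerivation_apply]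
  exact add_mem (Ideal.mul_mem_pow_of_le (hXd 1) ((pderiv 0).apply_mem_pow_pred hf) (by omega))
    (Ideal.mul_mem_pow_of_le (hXd 0) ((pderiv 1).apply_mem_pow_pred hf) (by omega))

theorem IsHomogeneous.leadingDerivation {p : MvPolynomial (Fin 2) R} {n : ℕ}
    (hp : IsHomogeneous p n) : IsHomogeneous (leadingDerivation d p) (d + (n - 1)) := by
  rw [leadingDerivation_apply]
  exact ((isHomogeneous_X_pow _ _).mul hp.pderiv).add ((isHomogeneous_X_pow _ _).mul hp.pderiv)

theorem eval_one_leadingDerivation {p : MvPolynomial (Fin 2) R} {n : ℕ}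
    (hp : IsHomogeneous p n) : eval 1 (leadingDerivation d p) = n * eval 1 p := by
  simpa [Fin.sum_univ_two, leadingDerivation_apply] using congrArg (eval 1) hp.sum_X_mul_pderiv

theorem isHomogeneous_leadingDerivation_pow_X_zero_and_eval_ne_zero {K : Type*} [Field K]
    [CharZero K] (hd : 1 ≤ d) (i : ℕ) :
    IsHomogeneous (((leadingDerivation (R := K) d).toLinearMap ^ i) (X 0)) (1 + i * (d - 1)) ∧
      eval 1 (((leadingDerivation (R := K) d).toLinearMap ^ i) (X 0)) ≠ 0 := by
  induction i with
  | zero => simpa using isHomogeneous_X K 0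
  | succ i ih =>
    obtain ⟨hhom, hev⟩ := ih
    rw [pow_succ', Module.End.mul_apply]
    refine ⟨?_, ?_⟩
    · have hdeg : d + (1 + i * (d - 1) - 1) = 1 + (i + 1) * (d - 1) := by
        rw [add_mul]; omega
      exact hdeg ▸ hhom.leadingDerivation d
    · rw [Derivation.coeFn_coe, eval_one_leadingDerivation d hhom]
      exact mul_ne_zero (Nat.cast_ne_zero.mpr (by omega)) hev

end LeadingDerivation

end MvPolynomial

noncomputable abbrev finiteDifference {R A : Type*} [CommSemiring R] [Ring A] [Algebra R A]
    (g : A ≃ₐ[R] A) : Module.End R A :=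
  g.toLinearMap - LinearMap.id

section NotLocallyFinite

open MvPolynomial

variable {K : Type*} [Field K] {d : ℕ} (hd : 2 ≤ d)
  (g : MvPolynomial (Fin 2) K ≃ₐ[K] MvPolynomial (Fin 2) K)
  (hgx : g (X 0) = X 0 + X 1 ^ d) (hgy : g (X 1) = X 1 + (X 0 + X 1 ^ d) ^ d)
include hd hgx hgy

theorem sub_sub_leadingDerivation_mem_pow {f : MvPolynomial (Fin 2) K} {n : ℕ}
    (hf : f ∈ idealOfVars (Fin 2) K ^ n) :
    g f - f - leadingDerivation d f ∈ idealOfVars (Fin 2) K ^ (n + (d - 1) + 1) := by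
  have hmem (i : Fin 2) : (X i : MvPolynomial (Fin 2) K) ∈ idealOfVars (Fin 2) K :=
    Ideal.subset_span (Set.mem_range_self i)
  refine sub_sub_derivation_mem_pow g (leadingDerivation d) (by omega)
    (fun n f hf => leadingDerivation_mem_pow d (by omega) hf) (Fin.forall_fin_two.mpr ⟨?_, ?_⟩) hf
  · rw [hgx, leadingDerivation_apply, pderiv_X_self, pderiv_X_of_ne zero_ne_one, mul_one, mul_zero,
      add_zero, add_sub_cancel_left, sub_self]
    exact zero_mem _
  · rw [hgy, leadingDerivation_apply, pderiv_X_self, pderiv_X_of_ne one_ne_zero, mul_zero,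
      zero_add, mul_one, add_sub_cancel_left]
    have hsub := Ideal.pow_sub_pow_mem_pow (add_mem (hmem 0) (Ideal.pow_mem_of_mem _ (hmem 1) d
      (by omega))) (hmem 0) (by rw [add_sub_cancel_left]; exact Ideal.pow_mem_pow (hmem 1) d) d
    exact Ideal.pow_le_pow_right (by omega) hsub

variable [CharZero K]

theorem finiteDifference_pow_X_zero_mem_and_coeff_ne_zero (i : ℕ) :
    (finiteDifference g ^ i) (X 0) ∈ idealOfVars (Fin 2) K ^ (1 + i * (d - 1)) ∧
      ∃ m : Fin 2 →₀ ℕ, m.degree = 1 + i * (d - 1) ∧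
        coeff m ((finiteDifference g ^ i) (X 0)) ≠ 0 := by
  let D : Module.End K (MvPolynomial (Fin 2) K) := (leadingDerivation d).toLinearMap
  let F (n : ℕ) := (idealOfVars (Fin 2) K ^ n).restrictScalars K
  have hD : ∀ n, ∀ f ∈ F n, D f ∈ F (n + (d - 1)) :=
    fun n f hf => leadingDerivation_mem_pow d (by omega) hf
  have hhD : ∀ n, ∀ f ∈ F n, finiteDifference g f - D f ∈ F (n + (d - 1) + 1) :=
    fun n f hf => sub_sub_leadingDerivation_mem_pow hd g hgx hgy hf
  have hh : ∀ n, ∀ f ∈ F n, finiteDifference g f ∈ F (n + (d - 1)) := fun n f hf => by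
    have := add_mem (hD n f hf) (Ideal.pow_le_pow_right (Nat.le_succ _) (hhD n f hf))
    rwa [add_sub_cancel] at this
  have hX : X 0 ∈ F 1 := by simpa [F] using Ideal.subset_span (Set.mem_range_self 0)
  obtain ⟨hhom, hev⟩ :=
    isHomogeneous_leadingDerivation_pow_X_zero_and_eval_ne_zero (K := K) d (by omega) i
  exact ⟨Module.End.pow_apply_mem_of_shift hh hX i,
    exists_coeff_ne_zero_of_sub_mem_pow_idealOfVars hhom (fun h0 => hev (by rw [h0, map_zero]))
      (Module.End.pow_apply_sub_pow_apply_mem_of_shift hh hD hhD hX i)⟩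

theorem linearIndependent_finiteDifference_pow_X_zero :
    LinearIndependent K fun i => (finiteDifference g ^ i) (X 0) := by
  refine linearIndependent_of_mem_filtration
    (F := fun n => (idealOfVars (Fin 2) K ^ n).restrictScalars K)
    (fun m n hmn _ hx => Ideal.pow_le_pow_right hmn hx) (fun i j hij => ?_)
    (fun i => (finiteDifference_pow_X_zero_mem_and_coeff_ne_zero hd g hgx hgy i).1) fun i hi => ?_
  · have := Nat.mul_lt_mul_of_pos_right hij (show 0 < d - 1 by omega)
    omega
  · obtain ⟨m, hm, hne⟩ := (finiteDifference_pow_X_zero_mem_and_coeff_ne_zero hd g hgx hgy i).2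
    exact hne ((mem_pow_idealOfVars_iff' _ _).mp hi m (by omega))

theorem not_finiteDimensional_of_X_zero_mem {V : Submodule K (MvPolynomial (Fin 2) K)}
    (hXV : X 0 ∈ V) (hV : ∀ v ∈ V, g v ∈ V) : ¬ FiniteDimensional K V := by
  intro hfin
  have hmem (i : ℕ) : (finiteDifference g ^ i) (X 0) ∈ V :=
    Module.End.pow_apply_mem_of_forall_mem i (fun v hv => sub_mem (hV v hv) hv) _ hXV
  exact Module.Finite.not_linearIndependent_of_infinite (fun i => (⟨_, hmem i⟩ : V))
    ((linearIndependent_finiteDifference_pow_X_zero hd g hgx hgy).of_comp V.subtype)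

end NotLocallyFinite

/-- Let `g` be the automorphism of `K[x,y]` with `g x = x + yᵈ` and
`g y = y + (x + yᵈ)ᵈ` (i.e. `g = exp(yᵈ∂/∂x) ∘ exp(xᵈ∂/∂y)`), `d ≥ 2`, and
set `h = g - id` (a `K`-linear endomorphism).  Then `hⁱ x` is nonzero with
minimal total degree of a monomial equal to `1 + i(d-1)`; consequently the
smallest `g`-stable subspace containing `x` is infinite-dimensional and `g`
is not locally finite. -/
theorem stmt8 {K : Type*} [Field K] [CharZero K] (d : ℕ) (hd : 2 ≤ d)
    (g : MvPolynomial (Fin 2) K ≃ₐ[K] MvPolynomial (Fin 2) K)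
    (hgx : g (X 0) = X 0 + X 1 ^ d)
    (hgy : g (X 1) = X 1 + (X 0 + X 1 ^ d) ^ d) :
    let h : MvPolynomial (Fin 2) K →ₗ[K] MvPolynomial (Fin 2) K :=
      g.toLinearMap - LinearMap.id
    (∀ i : ℕ, (h ^ i) (X 0) ≠ 0 ∧
      (∃ m : Fin 2 →₀ ℕ, (m.sum fun _ e => e) = 1 + i * (d - 1) ∧
        coeff m ((h ^ i) (X 0)) ≠ 0) ∧
      (∀ m : Fin 2 →₀ ℕ, (m.sum fun _ e => e) < 1 + i * (d - 1) →
        coeff m ((h ^ i) (X 0)) = 0)) ∧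
    (∀ V : Submodule K (MvPolynomial (Fin 2) K), X 0 ∈ V →
      (∀ v ∈ V, g v ∈ V) → ¬ FiniteDimensional K V) ∧
    ¬ IsLocFinAut g := by
  intro h
  refine ⟨fun i => ?_, fun V hXV hV => not_finiteDimensional_of_X_zero_mem hd g hgx hgy hXV hV,
    fun hlf => ?_⟩
  · obtain ⟨hmem, m, hm, hne⟩ := finiteDifference_pow_X_zero_mem_and_coeff_ne_zero hd g hgx hgy i
    exact ⟨fun h0 => hne (by rw [h0, coeff_zero]), ⟨m, hm, hne⟩,
      (mem_pow_idealOfVars_iff' _ _).mp hmem⟩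
  · obtain ⟨V, hXV, hfin, hV⟩ := hlf (X 0)
    exact not_finiteDimensional_of_X_zero_mem hd g hgx hgy hXV hV hfin
end

section
/- Let K be a field of characteristic 0, r ≥ 1, and let A be a commutative K-algebra graded by ℤ^r, i.e. A = ⊕_{m∈ℤ^r} A_m with A_m·A_{m'} ⊂ A_{m+m'}. Let δ be a locally finite K-derivation of A which decomposes as a finite sum δ = Σ_{χ∈S} δ_χ over a finite set S ⊂ ℤ^r, where each δ_χ is a nonzero derivation homogeneous of degree χ (i.e. δ_χ(A_m) ⊂ A_{m+χ} for all m). If v ∈ S is an extreme point (vertex) of the convex hull of S in ℚ^r and v ≠ 0, then δ_v is locally nilpotent. -/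
open Finset DirectSum Pointwise

theorem Convex.eq_of_sum_eq_card_nsmul_of_mem_extremePoints {𝕜 E ι : Type*} [Field 𝕜]
    [LinearOrder 𝕜] [IsStrictOrderedRing 𝕜] [AddCommGroup E] [Module 𝕜 E] {A : Set E}
    (hA : Convex 𝕜 A) {x : E} (hx : x ∈ A.extremePoints 𝕜) {t : Finset ι} {p : ι → E}
    (hp : ∀ i ∈ t, p i ∈ A) (hsum : ∑ i ∈ t, p i = #t • x) : ∀ i ∈ t, p i = x := by
  classical
  by_contra! hne
  -- The points `p i ≠ x` would average to `x`, but they lie in the convex set `A \ {x}`.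
  set u := {i ∈ t | p i - x ≠ 0}
  have hu : u.Nonempty := by simpa [u, Finset.filter_nonempty_iff, sub_eq_zero] using hne
  have hsum_u : ∑ i ∈ u, p i = #u • x := by
    have : ∑ i ∈ u, (p i - x) = 0 := by
      rw [Finset.sum_filter_ne_zero, Finset.sum_sub_distrib, hsum, Finset.sum_const, sub_self]
    rwa [Finset.sum_sub_distrib, Finset.sum_const, sub_eq_zero] at this
  have hcenter : u.centerMass (1 : ι → 𝕜) p = x := by
    simp only [Finset.centerMass, Pi.one_apply, one_smul, hsum_u, Finset.sum_const,
      nsmul_one, ← Nat.cast_smul_eq_nsmul 𝕜 #u x, smul_smul]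
    rw [inv_mul_cancel₀ (by exact_mod_cast hu.card_pos.ne'), one_smul]
  have hmem : u.centerMass (1 : ι → 𝕜) p ∈ A \ {x} :=
    (hA.mem_extremePoints_iff_convex_sdiff.mp hx).2.centerMass_mem (fun _ _ => zero_le_one)
      (by simpa using hu.card_pos) fun i hi =>
        ⟨hp i (Finset.mem_filter.mp hi).1, sub_ne_zero.mp (Finset.mem_filter.mp hi).2⟩
  exact hmem.2 hcenter

section MixedSums

variable {ι : Type*} [AddCommMonoid ι] (S : Finset ι) (v : ι)

-- The degree shifts produced by the words of length `n` in the `f χ`, `χ ∈ S`, other than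
-- `(f v)ⁿ`.
def mixedSums (n : ℕ) : Set ι :=
  {k | ∃ χ : Fin n → ι, (∀ i, χ i ∈ S) ∧ (∃ i, χ i ≠ v) ∧ ∑ i, χ i = k}

variable {S v}

theorem add_mem_mixedSums {n : ℕ} {k χ : ι} (hk : k ∈ mixedSums S v n) (hχ : χ ∈ S) :
    k + χ ∈ mixedSums S v (n + 1) := by
  obtain ⟨c, hcS, ⟨i, hi⟩, rfl⟩ := hk
  refine ⟨Fin.cons χ c, Fin.cases hχ hcS, ⟨i.succ, by simpa using hi⟩, ?_⟩
  rw [Fin.sum_cons, add_comm]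

theorem nsmul_add_mem_mixedSums (hv : v ∈ S) (n : ℕ) {χ : ι} (hχ : χ ∈ S) (hχv : χ ≠ v) :
    n • v + χ ∈ mixedSums S v (n + 1) :=
  ⟨Fin.cons χ fun _ => v, Fin.cases hχ fun _ => hv, ⟨0, by simpa using hχv⟩, by
    simp [add_comm]⟩

theorem nsmul_notMem_mixedSums {𝕜 E : Type*} [Field 𝕜] [LinearOrder 𝕜] [IsStrictOrderedRing 𝕜]
    [AddCommGroup E] [Module 𝕜 E] {φ : ι →+ E} (hφ : Function.Injective φ)
    (hv : φ v ∈ (convexHull 𝕜 (φ '' S)).extremePoints 𝕜) (n : ℕ) :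
    n • v ∉ mixedSums S v n := by
  rintro ⟨χ, hχS, ⟨i, hi⟩, hsum⟩
  refine hi (hφ ?_)
  refine (convex_convexHull 𝕜 _).eq_of_sum_eq_card_nsmul_of_mem_extremePoints hv
    (t := univ) (p := fun i => φ (χ i)) (fun i _ => subset_convexHull 𝕜 _ ⟨χ i, hχS i, rfl⟩) ?_ i
    (mem_univ i)
  rw [← map_sum, hsum, map_nsmul, card_univ, Fintype.card_fin]

end MixedSums

namespace DirectSum

variable {K M ι : Type*} [CommRing K] [AddCommGroup M] [Module K M] [DecidableEq ι]
  (𝒜 : ι → Submodule K M) [Decomposition 𝒜]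

theorem decompose_eq_zero_of_mem_biSup {B : Set ι} {x : M} (hx : x ∈ ⨆ i ∈ B, 𝒜 i) {j : ι}
    (hj : j ∉ B) : decompose 𝒜 x j = 0 := by
  let π : M →ₗ[K] 𝒜 j := component K ι (fun i => 𝒜 i) j ∘ₗ (decomposeLinearEquiv 𝒜).toLinearMap
  suffices ⨆ i ∈ B, 𝒜 i ≤ LinearMap.ker π from this hx
  refine iSup₂_le fun i hi y hy => ?_
  exact Subtype.ext (decompose_of_mem_ne 𝒜 hy (ne_of_mem_of_not_mem hi hj))

theorem exists_finset_le_biSup_of_fg {V : Submodule K M} (hV : V.FG) :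
    ∃ D : Finset ι, V ≤ ⨆ i ∈ D, 𝒜 i := by
  classical
  obtain ⟨t, rfl⟩ := hV
  refine ⟨t.sup fun y => (decompose 𝒜 y).support, Submodule.span_le.mpr fun y hy => ?_⟩
  rw [← sum_support_decompose 𝒜 y]
  exact Submodule.sum_mem _ fun i hi => Submodule.mem_iSup_of_mem i <|
    Submodule.mem_iSup_of_mem (Finset.le_sup (f := fun y => (decompose 𝒜 y).support) hy hi)
      (decompose 𝒜 y i).2

theorem exists_pow_apply_eq_zero_of_homogeneous {g : Module.End K M}
    (h : ∀ i, ∀ a ∈ 𝒜 i, ∃ n : ℕ, (g ^ n) a = 0) (a : M) : ∃ n : ℕ, (g ^ n) a = 0 := by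
  -- `g.maxGenEigenspace 0` is the submodule of vectors killed by some power of `g`.
  suffices a ∈ g.maxGenEigenspace 0 by simpa using this
  induction a using Decomposition.inductionOn 𝒜 with
  | zero => exact zero_mem _
  | homogeneous a => simpa using h _ a a.2
  | add a b ha hb => exact add_mem ha hb

end DirectSum

namespace Module.End

section Homogeneous

variable {K M ι : Type*} [CommRing K] [AddCommGroup M] [Module K M] [AddCommMonoid ι]

def IsHomogeneous (𝒜 : ι → Submodule K M) (χ : ι) (g : Module.End K M) : Prop :=
  ∀ m, ∀ a ∈ 𝒜 m, g a ∈ 𝒜 (m + χ)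

variable {𝒜 : ι → Submodule K M}

theorem IsHomogeneous.pow_apply_mem {g : Module.End K M} {v : ι} (hg : g.IsHomogeneous 𝒜 v)
    {m : ι} {a : M} (ha : a ∈ 𝒜 m) (n : ℕ) : (g ^ n) a ∈ 𝒜 (m + n • v) := by
  induction n with
  | zero => simpa using ha
  | succ n ih => simpa [pow_succ', succ_nsmul, add_assoc] using hg _ _ ih

theorem sum_apply_mem_biSup {f : ι → Module.End K M} {T : Finset ι}
    (hf : ∀ χ ∈ T, (f χ).IsHomogeneous 𝒜 χ) {B B' : Set ι}
    (hB : ∀ i ∈ B, ∀ χ ∈ T, i + χ ∈ B') {x : M} (hx : x ∈ ⨆ i ∈ B, 𝒜 i) :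
    (∑ χ ∈ T, f χ) x ∈ ⨆ i ∈ B', 𝒜 i := by
  suffices ⨆ i ∈ B, 𝒜 i ≤ (⨆ i ∈ B', 𝒜 i).comap (∑ χ ∈ T, f χ) from this hx
  refine iSup₂_le fun i hi y hy => ?_
  rw [Submodule.mem_comap, LinearMap.sum_apply]
  exact Submodule.sum_mem _ fun χ hχ =>
    Submodule.mem_iSup_of_mem _ <| Submodule.mem_iSup_of_mem (hB i hi χ hχ) (hf χ hχ i y hy)

variable {f : ι → Module.End K M} {S : Finset ι} {v : ι}

theorem pow_sum_apply_sub_pow_apply_mem (hf : ∀ χ ∈ S, (f χ).IsHomogeneous 𝒜 χ) (hv : v ∈ S)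
    {m : ι} {a : M} (ha : a ∈ 𝒜 m) (n : ℕ) :
    ((∑ χ ∈ S, f χ) ^ n) a - (f v ^ n) a ∈ ⨆ i ∈ m +ᵥ mixedSums S v n, 𝒜 i := by
  classical
  induction n with
  | zero => simp
  | succ n ih =>
    set F := ∑ χ ∈ S, f χ
    have hF : F ((f v ^ n) a) = f v ((f v ^ n) a) + (∑ χ ∈ S.erase v, f χ) ((f v ^ n) a) := by
      rw [← LinearMap.add_apply, add_sum_erase S f hv]
    have hsplit : (F ^ (n + 1)) a - (f v ^ (n + 1)) a =
        F ((F ^ n) a - (f v ^ n) a) + (∑ χ ∈ S.erase v, f χ) ((f v ^ n) a) := by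
      rw [pow_succ', pow_succ', mul_apply, mul_apply, map_sub, hF]
      abel
    rw [hsplit]
    refine add_mem (sum_apply_mem_biSup hf ?_ ih) (sum_apply_mem_biSup
      (fun χ hχ => hf χ (mem_of_mem_erase hχ)) (B := {m + n • v}) ?_ ?_)
    · rintro _ ⟨k, hk, rfl⟩ χ hχ
      exact ⟨k + χ, add_mem_mixedSums hk hχ, (add_assoc _ _ _).symm⟩
    · rintro _ rfl χ hχ
      exact ⟨n • v + χ, nsmul_add_mem_mixedSums hv n (mem_of_mem_erase hχ) (ne_of_mem_erase hχ),
        (add_assoc _ _ _).symm⟩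
    · exact Submodule.mem_iSup_of_mem _ <| Submodule.mem_iSup_of_mem rfl <|
        (hf v hv).pow_apply_mem ha n

end Homogeneous

section Graded

variable {K M ι : Type*} [CommRing K] [AddCommGroup M] [Module K M] [AddCancelCommMonoid ι]
  [DecidableEq ι] {𝒜 : ι → Submodule K M} [Decomposition 𝒜] {f : ι → Module.End K M}
  {S : Finset ι} {v : ι}

theorem decompose_pow_sum_apply_of_nsmul_notMem (hf : ∀ χ ∈ S, (f χ).IsHomogeneous 𝒜 χ)
    (hv : v ∈ S) {n : ℕ} (hn : n • v ∉ mixedSums S v n) {m : ι} {a : M} (ha : a ∈ 𝒜 m) :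
    (decompose 𝒜 (((∑ χ ∈ S, f χ) ^ n) a) (m + n • v) : M) = (f v ^ n) a := by
  have hm : m + n • v ∉ m +ᵥ mixedSums S v n := by
    rintro ⟨k, hk, hkv⟩
    exact hn (add_left_cancel hkv ▸ hk)
  have h0 := decompose_eq_zero_of_mem_biSup 𝒜 (pow_sum_apply_sub_pow_apply_mem hf hv ha n) hm
  rw [decompose_sub, DirectSum.sub_apply, sub_eq_zero] at h0
  rw [h0, decompose_of_mem_same 𝒜 ((hf v hv).pow_apply_mem ha n)]

theorem exists_pow_apply_eq_zero_of_nsmul_notMem (hf : ∀ χ ∈ S, (f χ).IsHomogeneous 𝒜 χ)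
    (hv : v ∈ S) (hn : ∀ n, n • v ∉ mixedSums S v n)
    (hv_inj : Function.Injective fun n : ℕ => n • v)
    (hfin : ∀ a, ∃ V : Submodule K M, a ∈ V ∧ V.FG ∧ ∀ x ∈ V, (∑ χ ∈ S, f χ) x ∈ V) (a : M) :
    ∃ n : ℕ, (f v ^ n) a = 0 := by
  refine exists_pow_apply_eq_zero_of_homogeneous 𝒜 (fun m a ha => ?_) a
  obtain ⟨V, haV, hV, hVinv⟩ := hfin a
  obtain ⟨D, hD⟩ := exists_finset_le_biSup_of_fg 𝒜 hV
  obtain ⟨_, ⟨n, rfl⟩, hnD⟩ :=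
    (Set.infinite_range_of_injective ((add_right_injective m).comp hv_inj)).exists_notMem_finset D
  refine ⟨n, ?_⟩
  rw [← decompose_pow_sum_apply_of_nsmul_notMem hf hv (hn n) ha,
    decompose_eq_zero_of_mem_biSup 𝒜 (hD (pow_apply_mem_of_forall_mem n hVinv a haV))
      (j := m + n • v) hnD,
    Submodule.coe_zero]

end Graded

end Module.End

theorem stmt9_general {K A : Type*} [Field K] [CommRing A] [Algebra K A]
    (r : ℕ) (𝒜 : (Fin r → ℤ) → Submodule K A) [GradedAlgebra 𝒜]
    (δ : Derivation K A A) (hlf : IsLocFin δ)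
    (S : Finset (Fin r → ℤ)) (δc : (Fin r → ℤ) → Derivation K A A)
    (hsum : δ = ∑ χ ∈ S, δc χ)
    (hhom : ∀ χ ∈ S, ∀ m : Fin r → ℤ, ∀ a ∈ 𝒜 m, (δc χ) a ∈ 𝒜 (m + χ))
    (v : Fin r → ℤ) (hvS : v ∈ S) (hv0 : v ≠ 0)
    (hext : (fun i => (v i : ℚ)) ∈
      Set.extremePoints ℚ
        (convexHull ℚ ((fun (m : Fin r → ℤ) (i : Fin r) => (m i : ℚ)) '' (S : Set (Fin r → ℤ))))) :
    IsLND (δc v) := by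
  let φ : (Fin r → ℤ) →+ (Fin r → ℚ) := (Int.castAddHom ℚ).compLeft (Fin r)
  have hφ : Function.Injective φ := fun a b h => funext fun i => Int.cast_injective (congrFun h i)
  have hv_inj : Function.Injective fun n : ℕ => n • v := fun n₁ n₂ h =>
    Nat.cast_injective (smul_left_injective ℤ hv0 (by simpa only [natCast_zsmul] using h))
  have hδ : ∀ x, δ x = (∑ χ ∈ S, (δc χ).toLinearMap) x := by
    intro x
    rw [hsum, LinearMap.sum_apply, ← Derivation.coeFnAddMonoidHom_apply, map_sum,
      Finset.sum_apply]
    rfl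
  have hfin : ∀ a, ∃ V : Submodule K A, a ∈ V ∧ V.FG ∧
      ∀ x ∈ V, (∑ χ ∈ S, (δc χ).toLinearMap) x ∈ V := fun a => by
    obtain ⟨V, haV, hV, hVinv⟩ := hlf a
    exact ⟨V, haV, Module.Finite.iff_fg.mp hV, fun x hx => hδ x ▸ hVinv x hx⟩
  intro a
  obtain ⟨n, hn⟩ := Module.End.exists_pow_apply_eq_zero_of_nsmul_notMem (𝒜 := 𝒜)
    (fun χ hχ => hhom χ hχ) hvS (nsmul_notMem_mixedSums hφ hext) hv_inj hfin a
  exact ⟨n + 1, Nat.le_add_left 1 n, by rw [pow_succ', Module.End.mul_apply, hn, map_zero]⟩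

/-- Let `A` be a commutative `K`-algebra graded by `ℤʳ` and `δ` a locally
finite derivation decomposing as a finite sum `δ = Σ_{χ ∈ S} δ_χ` of nonzero
homogeneous derivations of degree `χ`.  If `v ∈ S` is a nonzero vertex of the
convex hull of `S` in `ℚʳ`, then the component `δ_v` is locally nilpotent. -/
theorem stmt9 {K A : Type*} [Field K] [CharZero K] [CommRing A] [Algebra K A]
    (r : ℕ) (hr : 1 ≤ r) (𝒜 : (Fin r → ℤ) → Submodule K A) [GradedAlgebra 𝒜]
    (δ : Derivation K A A) (hlf : IsLocFin δ)
    (S : Finset (Fin r → ℤ)) (δc : (Fin r → ℤ) → Derivation K A A)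
    (hsum : δ = ∑ χ ∈ S, δc χ)
    (hnz : ∀ χ ∈ S, δc χ ≠ 0)
    (hhom : ∀ χ ∈ S, ∀ m : Fin r → ℤ, ∀ a ∈ 𝒜 m, (δc χ) a ∈ 𝒜 (m + χ))
    (v : Fin r → ℤ) (hvS : v ∈ S) (hv0 : v ≠ 0)
    (hext : (fun i => (v i : ℚ)) ∈
      Set.extremePoints ℚ
        (convexHull ℚ ((fun (m : Fin r → ℤ) (i : Fin r) => (m i : ℚ)) '' (S : Set (Fin r → ℤ))))) :
    IsLND (δc v) :=
  stmt9_general r 𝒜 δ hlf S δc hsum hhom v hvS hv0 hext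
end
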